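/- arXiv:1607.01839 — 7 statements merged into one kernel-verified Lean document; each statement's English description precedes it below -/
import Mathlib

section
/- Fix n ≥ 1, ν > 0 and σ ∈ (0,1/2). There exist constants C > 0 and c > 0 such that for every ℓ ∈ {0,1}, every t ≥ 0, and every ξ ∈ ℝⁿ with 0 < |ξ| ≤ ρ: |∂ₜ^ℓ 𝒥₁(t,ξ)| ≤ C e^{−c(1+t)|ξ|^{2(1−σ)}} |ξ|^{2(1−σ)ℓ} and |∂ₜ^ℓ 𝒥₂(t,ξ)| ≤ C e^{−c(1+t)|ξ|^{2(1−σ)}} |ξ|^{2(1−σ)ℓ − 2σ}, where ∂ₜ⁰ denotes the function itself and ∂ₜ¹ its time derivative. -/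
/-!
Write `a = (ν/2)|ξ|^{2σ}`, so that `λ± = -a ± √(a² - |ξ|²)`. The choice of `ρ` gives
`|ξ| ≤ η a` with `η = (1/2)^{1-2σ} < 1`, hence `λ₊ - λ₋ = 2√(a² - |ξ|²) ≥ 2√(1 - η²) a`:
the roots stay separated at the scale `a`. Since `-λ₊ = |ξ|² / (a + √(a² - |ξ|²))`, the rate
`-λ₊` lies between `|ξ|²/(2a) = |ξ|^{2(1-σ)}/ν` and twice that; this gives the decay rate
`c = 1/ν` and the factor `|ξ|^{2(1-σ)}` per time derivative, while `1/(λ₊ - λ₋) ≲ 1/a`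
accounts for `|ξ|^{-2σ}`. Replacing `t` by `1 + t` in the exponent costs the bounded factor
`exp(ρ^{2(1-σ)}/ν)`.
-/

open Real

lemma iter_deriv_mul_exp_div (A p D : ℝ) (k : ℕ) (t : ℝ) :
    deriv^[k] (fun s => A * exp (p * s) / D) t = A * p ^ k * exp (p * t) / D := by
  rw [← iteratedDeriv_eq_iterate]
  simp [mul_assoc]

lemma iter_deriv_exp_div (p D : ℝ) (k : ℕ) (t : ℝ) :
    deriv^[k] (fun s => exp (p * s) / D) t = p ^ k * exp (p * t) / D := by
  rw [← iteratedDeriv_eq_iterate]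
  simp

section QuadraticRoots

variable {a b : ℝ}

lemma sub_sqrt_mul_add_sqrt (hba : b ≤ a ^ 2) :
    (a - √(a ^ 2 - b)) * (a + √(a ^ 2 - b)) = b := by
  have := sq_sqrt (sub_nonneg.2 hba)
  linear_combination -this

lemma sqrt_sq_sub_le (ha : 0 ≤ a) (hb : 0 ≤ b) : √(a ^ 2 - b) ≤ a :=
  (sqrt_le_sqrt (by linarith)).trans_eq (sqrt_sq ha)

lemma div_two_mul_le_sub_sqrt (ha : 0 < a) (hb : 0 ≤ b) (hba : b ≤ a ^ 2) :
    b / (2 * a) ≤ a - √(a ^ 2 - b) := by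
  have hE := sqrt_sq_sub_le ha.le hb
  rw [div_le_iff₀ (by positivity)]
  calc b = (a - √(a ^ 2 - b)) * (a + √(a ^ 2 - b)) := (sub_sqrt_mul_add_sqrt hba).symm
    _ ≤ (a - √(a ^ 2 - b)) * (2 * a) := by gcongr; linarith

lemma sub_sqrt_le_div (ha : 0 < a) (hb : 0 ≤ b) (hba : b ≤ a ^ 2) :
    a - √(a ^ 2 - b) ≤ b / a := by
  have hE := sqrt_sq_sub_le ha.le hb
  rw [le_div_iff₀ ha]
  calc (a - √(a ^ 2 - b)) * a ≤ (a - √(a ^ 2 - b)) * (a + √(a ^ 2 - b)) := by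
        gcongr; linarith [sqrt_nonneg (a ^ 2 - b)]
    _ = b := sub_sqrt_mul_add_sqrt hba

lemma sqrt_one_sub_sq_mul_le {η : ℝ} (ha : 0 ≤ a) (h : b ≤ η ^ 2 * a ^ 2) :
    √(1 - η ^ 2) * a ≤ √(a ^ 2 - b) :=
  calc √(1 - η ^ 2) * a = √((1 - η ^ 2) * a ^ 2) := by rw [sqrt_mul' _ (sq_nonneg a), sqrt_sq ha]
    _ ≤ √(a ^ 2 - b) := sqrt_le_sqrt (by linarith)

lemma abs_pow_mul_exp_le (ha : 0 < a) (hb : 0 ≤ b) (hba : b ≤ a ^ 2) {t : ℝ} (ht : 0 ≤ t)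
    (k : ℕ) :
    |(-a + √(a ^ 2 - b)) ^ k * exp ((-a + √(a ^ 2 - b)) * t)|
      ≤ (b / a) ^ k * exp (-(b / (2 * a)) * t) := by
  have hlow := div_two_mul_le_sub_sqrt ha hb hba
  have hup := sub_sqrt_le_div ha hb hba
  have hdecay : 0 ≤ b / (2 * a) := by positivity
  rw [abs_mul, abs_pow, abs_exp, abs_of_nonpos (by linarith), neg_add', neg_neg]
  gcongr
  · linarith
  · nlinarith

variable {η p q t : ℝ}

lemma abs_J₁_le (ha : 0 < a) (hb : 0 ≤ b) (hη : η ^ 2 < 1) (hba : b ≤ η ^ 2 * a ^ 2)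
    (ht : 0 ≤ t) (k : ℕ) (hp : p = -a + √(a ^ 2 - b)) (hq : q = -a - √(a ^ 2 - b)) :
    |-q * p ^ k * exp (p * t) / (p - q)|
      ≤ (b / a) ^ k * exp (-(b / (2 * a)) * t) / √(1 - η ^ 2) := by
  have hκ : 0 < √(1 - η ^ 2) := sqrt_pos.2 (by linarith)
  have hκ1 : √(1 - η ^ 2) ≤ 1 := sqrt_le_one.2 (by nlinarith)
  have hE := sqrt_one_sub_sq_mul_le ha.le hba
  have hE0 : 0 < √(a ^ 2 - b) := (mul_pos hκ ha).trans_le hE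
  have hX := hp ▸ abs_pow_mul_exp_le ha hb (hba.trans (by nlinarith)) ht k
  have hpq : p - q = 2 * √(a ^ 2 - b) := by rw [hp, hq]; ring
  have hfactor : (a + √(a ^ 2 - b)) / (2 * √(a ^ 2 - b)) ≤ 1 / √(1 - η ^ 2) := by
    rw [div_le_div_iff₀ (by positivity) hκ]
    nlinarith
  calc |-q * p ^ k * exp (p * t) / (p - q)|
        = (a + √(a ^ 2 - b)) / (2 * √(a ^ 2 - b)) * |p ^ k * exp (p * t)| := by
          rw [hpq, show -q * p ^ k * exp (p * t) / (2 * √(a ^ 2 - b))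
              = (a + √(a ^ 2 - b)) / (2 * √(a ^ 2 - b)) * (p ^ k * exp (p * t)) by rw [hq]; ring,
            abs_mul, abs_of_pos (by positivity)]
    _ ≤ 1 / √(1 - η ^ 2) * ((b / a) ^ k * exp (-(b / (2 * a)) * t)) := by gcongr
    _ = _ := by ring

lemma abs_J₂_le (ha : 0 < a) (hb : 0 ≤ b) (hη : η ^ 2 < 1) (hba : b ≤ η ^ 2 * a ^ 2)
    (ht : 0 ≤ t) (k : ℕ) (hp : p = -a + √(a ^ 2 - b)) (hq : q = -a - √(a ^ 2 - b)) :
    |p ^ k * exp (p * t) / (p - q)|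
      ≤ (b / a) ^ k * exp (-(b / (2 * a)) * t) / (2 * √(1 - η ^ 2) * a) := by
  have hκ : 0 < √(1 - η ^ 2) := sqrt_pos.2 (by linarith)
  have hE := sqrt_one_sub_sq_mul_le ha.le hba
  have hX := hp ▸ abs_pow_mul_exp_le ha hb (hba.trans (by nlinarith)) ht k
  have hpq : p - q = 2 * √(a ^ 2 - b) := by rw [hp, hq]; ring
  rw [hpq, abs_div, abs_of_pos (a := 2 * √(a ^ 2 - b)) (by nlinarith [mul_pos hκ ha])]
  exact div_le_div₀ (by positivity) hX (by positivity) (by linarith)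

end QuadraticRoots

noncomputable def lowFreqConst (ν σ ρ : ℝ) : ℝ :=
  max 1 (2 / ν) ^ 2 / √(1 - ((1 / 2 : ℝ) ^ (1 - 2 * σ)) ^ 2) * exp (ρ ^ (2 * (1 - σ)) / ν)

section LowFrequency

variable {ν σ ρ r : ℝ}

lemma sq_half_rpow_lt_one (hσ : σ < 1 / 2) : ((1 / 2 : ℝ) ^ (1 - 2 * σ)) ^ 2 < 1 := by
  have h0 : 0 < (1 / 2 : ℝ) ^ (1 - 2 * σ) := by positivity
  have h1 : (1 / 2 : ℝ) ^ (1 - 2 * σ) < 1 := rpow_lt_one (by norm_num) (by norm_num) (by linarith)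
  nlinarith

lemma lowFreqConst_pos (hσ : σ < 1 / 2) : 0 < lowFreqConst ν σ ρ := by
  have := sq_half_rpow_lt_one hσ
  have : 0 < √(1 - ((1 / 2 : ℝ) ^ (1 - 2 * σ)) ^ 2) := sqrt_pos.2 (by linarith)
  unfold lowFreqConst
  positivity

lemma le_half_rpow_mul_of_le (hν : 0 < ν) (hσ : σ < 1 / 2)
    (hρ : ρ = (1 / 2) * (ν / 2) ^ ((1 : ℝ) / (1 - 2 * σ))) (hr0 : 0 < r) (hrρ : r ≤ ρ) :
    r ≤ (1 / 2) ^ (1 - 2 * σ) * (ν / 2 * r ^ (2 * σ)) := by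
  have hρpow : ρ ^ (1 - 2 * σ) = (1 / 2) ^ (1 - 2 * σ) * (ν / 2) := by
    rw [hρ, mul_rpow (by norm_num) (by positivity), one_div (1 - 2 * σ),
      rpow_inv_rpow (by positivity) (by linarith)]
  calc r = r ^ (2 * σ) * r ^ (1 - 2 * σ) := by rw [← rpow_add hr0]; norm_num
    _ ≤ r ^ (2 * σ) * ρ ^ (1 - 2 * σ) := by gcongr; linarith
    _ = _ := by rw [hρpow]; ring

lemma rpow_two_mul_mul_rpow_two_mul_one_sub (hr : 0 < r) :
    r ^ (2 * σ) * r ^ (2 * (1 - σ)) = r ^ 2 := by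
  rw [← rpow_add hr, ← rpow_two]; ring_nf

lemma rpow_four_mul_eq_sq (hr : 0 ≤ r) : r ^ (4 * σ) = (r ^ (2 * σ)) ^ 2 := by
  rw [← rpow_mul_natCast hr]; ring_nf

lemma exp_neg_div_mul_le (hν : 0 < ν) {x X t : ℝ} (hxX : x ≤ X) :
    exp (-(x / ν) * t) ≤ exp (X / ν) * exp (-(1 / ν) * (1 + t) * x) := by
  rw [← exp_add]
  gcongr
  have : x / ν ≤ X / ν := by gcongr
  linarith [show -(x / ν) * t = -(1 / ν) * t * x by ring,
    show -(1 / ν) * (1 + t) * x = -(x / ν) - (1 / ν) * t * x by ring]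

lemma pow_le_max_one {x : ℝ} {ℓ : ℕ} (hℓ : ℓ ≤ 1) : x ^ ℓ ≤ max 1 x := by
  interval_cases ℓ <;> simp

theorem abs_J₁_J₂_le_of_le_radius (hν : 0 < ν) (hσ : σ < 1 / 2)
    (hρ : ρ = (1 / 2) * (ν / 2) ^ ((1 : ℝ) / (1 - 2 * σ))) (hr0 : 0 < r) (hrρ : r ≤ ρ)
    {p q t : ℝ} (ht : 0 ≤ t) {ℓ : ℕ} (hℓ : ℓ ≤ 1)
    (hp : p = -(ν / 2) * r ^ (2 * σ) + √(ν ^ 2 / 4 * r ^ (4 * σ) - r ^ 2))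
    (hq : q = -(ν / 2) * r ^ (2 * σ) - √(ν ^ 2 / 4 * r ^ (4 * σ) - r ^ 2)) :
    |-q * p ^ ℓ * exp (p * t) / (p - q)|
        ≤ lowFreqConst ν σ ρ * exp (-(1 / ν) * (1 + t) * r ^ (2 * (1 - σ)))
          * r ^ (2 * (1 - σ) * (ℓ : ℝ)) ∧
      |p ^ ℓ * exp (p * t) / (p - q)|
        ≤ lowFreqConst ν σ ρ * exp (-(1 / ν) * (1 + t) * r ^ (2 * (1 - σ)))
          * r ^ (2 * (1 - σ) * (ℓ : ℝ) - 2 * σ) := by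
  set a := ν / 2 * r ^ (2 * σ) with ha
  set η := (1 / 2 : ℝ) ^ (1 - 2 * σ)
  set κ := √(1 - η ^ 2)
  set M := max 1 (2 / ν)
  set rα := r ^ (2 * (1 - σ))
  have ha0 : 0 < a := by positivity
  have hκ : 0 < κ := sqrt_pos.2 (by linarith [sq_half_rpow_lt_one hσ])
  have hdisc : ν ^ 2 / 4 * r ^ (4 * σ) - r ^ 2 = a ^ 2 - r ^ 2 := by
    rw [rpow_four_mul_eq_sq hr0.le]; ring
  have hp' : p = -a + √(a ^ 2 - r ^ 2) := by rw [hp, hdisc]; ring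
  have hq' : q = -a - √(a ^ 2 - r ^ 2) := by rw [hq, hdisc]; ring
  have hba : r ^ 2 ≤ η ^ 2 * a ^ 2 := by
    rw [← mul_pow]
    exact pow_le_pow_left₀ hr0.le (le_half_rpow_mul_of_le hν hσ hρ hr0 hrρ) 2
  have hsplit : r ^ 2 = r ^ (2 * σ) * rα := (rpow_two_mul_mul_rpow_two_mul_one_sub hr0).symm
  have hratio : r ^ 2 / a = 2 / ν * rα := by rw [hsplit, ha]; field_simp
  have hdecay : r ^ 2 / (2 * a) = rα / ν := by rw [hsplit, ha]; field_simp
  have hpow : r ^ (2 * (1 - σ) * (ℓ : ℝ)) = rα ^ ℓ := rpow_mul_natCast hr0.le _ _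
  have hexp := exp_neg_div_mul_le hν (t := t)
    (rpow_le_rpow hr0.le hrρ (by linarith : 0 ≤ 2 * (1 - σ)))
  have hM1 : 1 ≤ M := le_max_left _ _
  have hM : (2 / ν * rα) ^ ℓ ≤ M * rα ^ ℓ := by
    rw [mul_pow]; gcongr; exact pow_le_max_one hℓ
  constructor
  · calc _ ≤ (r ^ 2 / a) ^ ℓ * exp (-(r ^ 2 / (2 * a)) * t) / κ :=
          abs_J₁_le ha0 (sq_nonneg r) (sq_half_rpow_lt_one hσ) hba ht ℓ hp' hq'
      _ = (2 / ν * rα) ^ ℓ * exp (-(rα / ν) * t) / κ := by rw [hratio, hdecay]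
      _ ≤ (M * rα ^ ℓ) * (exp (ρ ^ (2 * (1 - σ)) / ν) * exp (-(1 / ν) * (1 + t) * rα)) / κ := by
          gcongr
      _ ≤ (M ^ 2 * rα ^ ℓ) * (exp (ρ ^ (2 * (1 - σ)) / ν) * exp (-(1 / ν) * (1 + t) * rα)) / κ := by
          gcongr; nlinarith
      _ = _ := by rw [hpow]; unfold lowFreqConst; ring
  · have hν1 : 1 / ν ≤ M :=
      (div_le_div_of_nonneg_right (by norm_num) hν.le).trans (le_max_right _ _)
    calc _ ≤ (r ^ 2 / a) ^ ℓ * exp (-(r ^ 2 / (2 * a)) * t) / (2 * κ * a) :=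
          abs_J₂_le ha0 (sq_nonneg r) (sq_half_rpow_lt_one hσ) hba ht ℓ hp' hq'
      _ = (2 / ν * rα) ^ ℓ * exp (-(rα / ν) * t) * (1 / ν) / κ / r ^ (2 * σ) := by
          rw [hratio, hdecay, ha]; field_simp
      _ ≤ (M * rα ^ ℓ) * (exp (ρ ^ (2 * (1 - σ)) / ν) * exp (-(1 / ν) * (1 + t) * rα)) * M / κ
            / r ^ (2 * σ) := by
          gcongr
      _ = _ := by rw [rpow_sub hr0, hpow]; unfold lowFreqConst; ring

end LowFrequency

theorem stmt3_general (n : ℕ) (ν σ : ℝ) (hν : 0 < ν)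
    (hσ : σ ∈ Set.Ioo (0:ℝ) (1/2)) (ρ : ℝ)
    (hρ : ρ = (1/2) * (ν/2) ^ ((1:ℝ)/(1 - 2*σ)))
    (lp lm : EuclideanSpace ℝ (Fin n) → ℝ)
    (hlp : ∀ ξ, lp ξ = -(ν/2) * ‖ξ‖ ^ (2*σ) + Real.sqrt (ν^2/4 * ‖ξ‖ ^ (4*σ) - ‖ξ‖^2))
    (hlm : ∀ ξ, lm ξ = -(ν/2) * ‖ξ‖ ^ (2*σ) - Real.sqrt (ν^2/4 * ‖ξ‖ ^ (4*σ) - ‖ξ‖^2)) :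
    ∃ C > 0, ∃ c > 0, ∀ ℓ : ℕ, ℓ ≤ 1 → ∀ t : ℝ, 0 ≤ t →
      ∀ ξ : EuclideanSpace ℝ (Fin n), 0 < ‖ξ‖ → ‖ξ‖ ≤ ρ →
        |deriv^[ℓ] (fun s => -(lm ξ) * Real.exp (lp ξ * s) / (lp ξ - lm ξ)) t|
            ≤ C * Real.exp (-c * (1 + t) * ‖ξ‖ ^ (2*(1 - σ))) * ‖ξ‖ ^ (2*(1 - σ)*(ℓ:ℝ)) ∧
        |deriv^[ℓ] (fun s => Real.exp (lp ξ * s) / (lp ξ - lm ξ)) t|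
            ≤ C * Real.exp (-c * (1 + t) * ‖ξ‖ ^ (2*(1 - σ))) * ‖ξ‖ ^ (2*(1 - σ)*(ℓ:ℝ) - 2*σ) := by
  refine ⟨lowFreqConst ν σ ρ, lowFreqConst_pos hσ.2, 1 / ν, by positivity,
    fun ℓ hℓ t ht ξ hξ0 hξρ => ?_⟩
  rw [iter_deriv_mul_exp_div, iter_deriv_exp_div]
  exact abs_J₁_J₂_le_of_le_radius hν hσ.2 hρ hξ0 hξρ ht hℓ (hlp ξ) (hlm ξ)

/-- Pointwise low-frequency estimates for the multipliers `𝒥₁` and `𝒥₂` arising from the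
structurally damped wave equation with `σ ∈ (0,1/2)`, for `ℓ = 0, 1` time derivatives. -/
theorem stmt3 (n : ℕ) (hn : 1 ≤ n) (ν σ : ℝ) (hν : 0 < ν)
    (hσ : σ ∈ Set.Ioo (0:ℝ) (1/2)) (ρ : ℝ)
    (hρ : ρ = (1/2) * (ν/2) ^ ((1:ℝ)/(1 - 2*σ)))
    (lp lm : EuclideanSpace ℝ (Fin n) → ℝ)
    (hlp : ∀ ξ, lp ξ = -(ν/2) * ‖ξ‖ ^ (2*σ) + Real.sqrt (ν^2/4 * ‖ξ‖ ^ (4*σ) - ‖ξ‖^2))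
    (hlm : ∀ ξ, lm ξ = -(ν/2) * ‖ξ‖ ^ (2*σ) - Real.sqrt (ν^2/4 * ‖ξ‖ ^ (4*σ) - ‖ξ‖^2)) :
    ∃ C > 0, ∃ c > 0, ∀ ℓ : ℕ, ℓ ≤ 1 → ∀ t : ℝ, 0 ≤ t →
      ∀ ξ : EuclideanSpace ℝ (Fin n), 0 < ‖ξ‖ → ‖ξ‖ ≤ ρ →
        |deriv^[ℓ] (fun s => -(lm ξ) * Real.exp (lp ξ * s) / (lp ξ - lm ξ)) t|
            ≤ C * Real.exp (-c * (1 + t) * ‖ξ‖ ^ (2*(1 - σ))) * ‖ξ‖ ^ (2*(1 - σ)*(ℓ:ℝ)) ∧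
        |deriv^[ℓ] (fun s => Real.exp (lp ξ * s) / (lp ξ - lm ξ)) t|
            ≤ C * Real.exp (-c * (1 + t) * ‖ξ‖ ^ (2*(1 - σ))) * ‖ξ‖ ^ (2*(1 - σ)*(ℓ:ℝ) - 2*σ) :=
  stmt3_general n ν σ hν hσ ρ hρ lp lm hlp hlm
end

section
/- Fix n ≥ 1, ν > 0 and σ ∈ (1/2,1]. There exist constants C > 0 and c > 0 such that for every ℓ ∈ {0,1}, every t ≥ 0, and every ξ ∈ ℝⁿ with 0 < |ξ| ≤ ρ: |∂ₜ^ℓ 𝒦₁(t,ξ)| ≤ C e^{−c(1+t)|ξ|^{2σ}} |ξ|^{ℓ}, |∂ₜ^ℓ 𝒦₂(t,ξ)| ≤ C e^{−c(1+t)|ξ|^{2σ}} |ξ|^{ℓ+1}, and |∂ₜ^ℓ 𝒦₃(t,ξ)| ≤ C e^{−c(1+t)|ξ|^{2σ}} |ξ|^{ℓ−1}, where ∂ₜ⁰ denotes the function itself and ∂ₜ¹ its time derivative. -/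
/-!
For `0 < |ξ| ≤ ρ` the quantity `θ = (ν/2)|ξ|^{2σ-1}` is at most `(1/2)^{2σ-1} < 1`, with equality
at `|ξ| = ρ`. Hence `φ_σ(ξ) = √(1 - θ²)` stays in `[φ₀, 1]` for a constant `φ₀ > 0`, and the
damping rate `κ = (ν/2)|ξ|^{2σ} = θ|ξ|` and the frequency `ω = |ξ|φ_σ(ξ)` satisfy `κ + ω ≤ 2|ξ|`.
Each multiplier is `1`, `ν|ξ|/(2φ_σ(ξ))` or `1/(|ξ|φ_σ(ξ))` times `e^{-κt} g(ωt)` with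
`g = cos` or `sin`, whose time derivative is bounded by `(κ + ω) e^{-κt}`. Finally
`e^{-κt} ≤ e^{(ν/2)ρ^{2σ}} e^{-(ν/2)(1+t)|ξ|^{2σ}}` because `κ ≤ (ν/2)ρ^{2σ}`.
-/

open Real

theorem iterate_deriv_const_mul (c : ℝ) (f : ℝ → ℝ) (ℓ : ℕ) :
    deriv^[ℓ] (fun s => c * f s) = fun s => c * deriv^[ℓ] f s := by
  induction ℓ generalizing f with
  | zero => rfl
  | succ ℓ ih => simp only [Function.iterate_succ_apply, deriv_const_mul_field', ih]

theorem abs_iterate_deriv_exp_mul_comp_le {g g' : ℝ → ℝ} (hg : ∀ x, HasDerivAt g (g' x) x)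
    (hg_le : ∀ x, |g x| ≤ 1) (hg'_le : ∀ x, |g' x| ≤ 1) (κ ω t : ℝ) {ℓ : ℕ} (hℓ : ℓ ≤ 1) :
    |deriv^[ℓ] (fun s => rexp (-κ * s) * g (ω * s)) t| ≤ (|κ| + |ω|) ^ ℓ * rexp (-κ * t) := by
  have hE : 0 < rexp (-κ * t) := exp_pos _
  interval_cases ℓ
  · rw [Function.iterate_zero_apply, abs_mul, abs_of_pos hE, pow_zero, one_mul]
    exact mul_le_of_le_one_right hE.le (hg_le _)
  · have hd : HasDerivAt (fun s => rexp (-κ * s) * g (ω * s))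
        (rexp (-κ * t) * -κ * g (ω * t) + rexp (-κ * t) * (g' (ω * t) * ω)) t := by
      have h1 : HasDerivAt (fun s => rexp (-κ * s)) (rexp (-κ * t) * -κ) t := by
        simpa using ((hasDerivAt_id t).const_mul (-κ)).exp
      have h2 : HasDerivAt (fun s => g (ω * s)) (g' (ω * t) * ω) t :=
        (hg (ω * t)).comp t (by simpa using (hasDerivAt_id t).const_mul ω)
      exact h1.mul h2
    rw [Function.iterate_one, hd.deriv, pow_one]
    calc _ ≤ |rexp (-κ * t) * -κ * g (ω * t)| + |rexp (-κ * t) * (g' (ω * t) * ω)| :=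
          abs_add_le _ _
      _ ≤ rexp (-κ * t) * |κ| * 1 + rexp (-κ * t) * (1 * |ω|) := by
          simp only [abs_mul, abs_neg, abs_of_pos hE]
          gcongr
          exacts [hg_le _, hg'_le _]
      _ = (|κ| + |ω|) * rexp (-κ * t) := by ring

theorem exp_neg_mul_le_exp_mul_exp_neg_mul {κ r R : ℝ} (hκ : 0 ≤ κ) (hrR : r ≤ R) (t : ℝ) :
    rexp (-κ * t * r) ≤ rexp (κ * R) * rexp (-κ * (1 + t) * r) := by
  rw [← exp_add]
  exact exp_le_exp.2 (by nlinarith)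

/-- `multiplierᵢ ν σ ‖ξ‖ (φ_σ ξ)` is the multiplier `𝒦ᵢ(·, ξ)`. -/
noncomputable def multiplier₁ (ν σ a Φ s : ℝ) : ℝ := rexp (-(ν/2) * s * a ^ (2*σ)) * cos (s * a * Φ)

noncomputable def multiplier₂ (ν σ a Φ s : ℝ) : ℝ :=
  rexp (-(ν/2) * s * a ^ (2*σ)) * ν * a * sin (s * a * Φ) / (2 * Φ)

noncomputable def multiplier₃ (ν σ a Φ s : ℝ) : ℝ :=
  rexp (-(ν/2) * s * a ^ (2*σ)) * sin (s * a * Φ) / (a * Φ)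

section Multipliers

variable {ν σ a Φ : ℝ}

theorem abs_iterate_deriv_multiplier_le {g g' : ℝ → ℝ}
    (hg : ∀ x, HasDerivAt g (g' x) x) (hg_le : ∀ x, |g x| ≤ 1) (hg'_le : ∀ x, |g' x| ≤ 1)
    (hν : 0 ≤ ν) (ha : 0 ≤ a) (hΦ : 0 ≤ Φ) (t : ℝ) {ℓ : ℕ} (hℓ : ℓ ≤ 1) :
    |deriv^[ℓ] (fun s => rexp (-(ν/2) * s * a ^ (2*σ)) * g (s * a * Φ)) t|
      ≤ (ν/2 * a ^ (2*σ) + a * Φ) ^ ℓ * rexp (-(ν/2) * t * a ^ (2*σ)) := by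
  have h := abs_iterate_deriv_exp_mul_comp_le hg hg_le hg'_le (ν/2 * a ^ (2*σ)) (a * Φ) t hℓ
  have hκ : 0 ≤ ν/2 * a ^ (2*σ) := by positivity
  rw [abs_of_nonneg hκ, abs_of_nonneg (mul_nonneg ha hΦ)] at h
  have hfun : (fun s => rexp (-(ν/2) * s * a ^ (2*σ)) * g (s * a * Φ))
      = fun s => rexp (-(ν/2 * a ^ (2*σ)) * s) * g (a * Φ * s) := by
    funext s
    ring_nf
  rw [hfun]
  convert h using 3
  ring

theorem abs_iterate_deriv_multiplier₁_le (hν : 0 ≤ ν) (ha : 0 ≤ a) (hΦ : 0 ≤ Φ) (t : ℝ)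
    {ℓ : ℕ} (hℓ : ℓ ≤ 1) :
    |deriv^[ℓ] (multiplier₁ ν σ a Φ) t|
      ≤ (ν/2 * a ^ (2*σ) + a * Φ) ^ ℓ * rexp (-(ν/2) * t * a ^ (2*σ)) :=
  abs_iterate_deriv_multiplier_le (fun x => hasDerivAt_cos x) abs_cos_le_one
    (fun x => (abs_neg _).trans_le (abs_sin_le_one x)) hν ha hΦ t hℓ

theorem abs_iterate_deriv_exp_mul_sin_le (hν : 0 ≤ ν) (ha : 0 ≤ a) (hΦ : 0 ≤ Φ) (t : ℝ)
    {ℓ : ℕ} (hℓ : ℓ ≤ 1) :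
    |deriv^[ℓ] (fun s => rexp (-(ν/2) * s * a ^ (2*σ)) * sin (s * a * Φ)) t|
      ≤ (ν/2 * a ^ (2*σ) + a * Φ) ^ ℓ * rexp (-(ν/2) * t * a ^ (2*σ)) :=
  abs_iterate_deriv_multiplier_le (fun x => hasDerivAt_sin x) abs_sin_le_one
    abs_cos_le_one hν ha hΦ t hℓ

theorem abs_iterate_deriv_multiplier₂_le (hν : 0 ≤ ν) (ha : 0 ≤ a) (hΦ : 0 < Φ) (t : ℝ)
    {ℓ : ℕ} (hℓ : ℓ ≤ 1) :
    |deriv^[ℓ] (multiplier₂ ν σ a Φ) t|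
      ≤ ν * a / (2 * Φ) * ((ν/2 * a ^ (2*σ) + a * Φ) ^ ℓ * rexp (-(ν/2) * t * a ^ (2*σ))) := by
  have h : multiplier₂ ν σ a Φ =
      fun s => ν * a / (2 * Φ) * (rexp (-(ν/2) * s * a ^ (2*σ)) * sin (s * a * Φ)) := by
    funext s
    rw [multiplier₂]
    ring
  rw [h, iterate_deriv_const_mul, abs_mul, abs_of_nonneg (by positivity)]
  gcongr
  exact abs_iterate_deriv_exp_mul_sin_le hν ha hΦ.le t hℓ

theorem abs_iterate_deriv_multiplier₃_le (hν : 0 ≤ ν) (ha : 0 ≤ a) (hΦ : 0 ≤ Φ) (t : ℝ)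
    {ℓ : ℕ} (hℓ : ℓ ≤ 1) :
    |deriv^[ℓ] (multiplier₃ ν σ a Φ) t|
      ≤ 1 / (a * Φ) * ((ν/2 * a ^ (2*σ) + a * Φ) ^ ℓ * rexp (-(ν/2) * t * a ^ (2*σ))) := by
  have h : multiplier₃ ν σ a Φ =
      fun s => 1 / (a * Φ) * (rexp (-(ν/2) * s * a ^ (2*σ)) * sin (s * a * Φ)) := by
    funext s
    rw [multiplier₃]
    ring
  rw [h, iterate_deriv_const_mul, abs_mul, abs_of_nonneg (by positivity)]
  gcongr
  exact abs_iterate_deriv_exp_mul_sin_le hν ha hΦ t hℓ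

end Multipliers

/-- The value of `φ_σ(ξ)` at `|ξ| = ρ`. -/
noncomputable def phiLowerBound (σ : ℝ) : ℝ := √(1 - ((1/2) ^ (2*σ - 1)) ^ 2)

theorem phiLowerBound_pos {σ : ℝ} (hσ : 1/2 < σ) : 0 < phiLowerBound σ := by
  have h1 : (1/2 : ℝ) ^ (2*σ - 1) < 1 := rpow_lt_one (by norm_num) (by norm_num) (by linarith)
  have h0 : 0 < (1/2 : ℝ) ^ (2*σ - 1) := by positivity
  exact sqrt_pos.2 (by nlinarith)

theorem phiLowerBound_le_one (σ : ℝ) : phiLowerBound σ ≤ 1 :=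
  sqrt_le_one.2 (sub_le_self _ (sq_nonneg _))

section LowFrequency

variable {ν σ ρ a : ℝ}

theorem half_mul_rpow_eq_of_rho_eq (hν : 0 < ν) (hσ : 1/2 < σ)
    (hρ : ρ = (1/2) * (2/ν) ^ ((1:ℝ)/(2*σ - 1))) :
    ν / 2 * ρ ^ (2*σ - 1) = (1/2) ^ (2*σ - 1) := by
  have h2ν : 0 ≤ 2 / ν := by positivity
  rw [hρ, mul_rpow (by norm_num) (rpow_nonneg h2ν _), one_div (2*σ - 1),
    rpow_inv_rpow h2ν (by linarith)]
  field_simp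

theorem half_mul_rpow_le_of_le_rho (hν : 0 < ν) (hσ : 1/2 < σ)
    (hρ : ρ = (1/2) * (2/ν) ^ ((1:ℝ)/(2*σ - 1))) (ha : 0 ≤ a) (haρ : a ≤ ρ) :
    ν / 2 * a ^ (2*σ - 1) ≤ (1/2) ^ (2*σ - 1) := by
  rw [← half_mul_rpow_eq_of_rho_eq hν hσ hρ]
  gcongr
  linarith

theorem sqrt_one_sub_mem_Icc_phiLowerBound (hν : 0 < ν) (hσ : 1/2 < σ)
    (hρ : ρ = (1/2) * (2/ν) ^ ((1:ℝ)/(2*σ - 1))) (ha : 0 ≤ a) (haρ : a ≤ ρ) :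
    √(1 - ν^2/4 * a ^ (4*σ - 2)) ∈ Set.Icc (phiLowerBound σ) 1 := by
  have hsq : ν^2/4 * a ^ (4*σ - 2) = (ν / 2 * a ^ (2*σ - 1)) ^ 2 := by
    rw [mul_pow, ← rpow_natCast (a ^ _), ← rpow_mul ha]
    ring_nf
  have h := half_mul_rpow_le_of_le_rho hν hσ hρ ha haρ
  rw [hsq]
  constructor
  · unfold phiLowerBound
    gcongr
  · exact sqrt_le_one.2 (by nlinarith [sq_nonneg (ν / 2 * a ^ (2*σ - 1))])

theorem rate_add_freq_le_of_le_rho (hν : 0 < ν) (hσ : 1/2 < σ)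
    (hρ : ρ = (1/2) * (2/ν) ^ ((1:ℝ)/(2*σ - 1))) (ha : 0 < a) (haρ : a ≤ ρ) {Φ : ℝ} (hΦ : Φ ≤ 1) :
    ν / 2 * a ^ (2*σ) + a * Φ ≤ 2 * a := by
  have h := half_mul_rpow_le_of_le_rho hν hσ hρ ha.le haρ
  have h1 : (1/2 : ℝ) ^ (2*σ - 1) ≤ 1 := rpow_le_one (by norm_num) (by norm_num) (by linarith)
  have hsplit : a ^ (2*σ) = a * a ^ (2*σ - 1) := by
    rw [← rpow_one_add' ha.le (by linarith)]
    ring_nf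
  rw [hsplit]
  nlinarith

end LowFrequency

section LowFrequencyMultipliers

variable {ν σ ρ a Φ : ℝ}

theorem pow_rate_add_freq_le (hν : 0 < ν) (hσ : 1/2 < σ)
    (hρ : ρ = (1/2) * (2/ν) ^ ((1:ℝ)/(2*σ - 1))) (ha : 0 < a) (haρ : a ≤ ρ)
    (hΦ : Φ = √(1 - ν^2/4 * a ^ (4*σ - 2))) {ℓ : ℕ} (hℓ : ℓ ≤ 1) :
    (ν/2 * a ^ (2*σ) + a * Φ) ^ ℓ ≤ 2 * a ^ (ℓ : ℝ) := by
  have h := rate_add_freq_le_of_le_rho hν hσ hρ ha haρ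
    (hΦ ▸ (sqrt_one_sub_mem_Icc_phiLowerBound hν hσ hρ ha.le haρ).2)
  interval_cases ℓ <;> simp [h]

theorem abs_iterate_deriv_multiplier₁_le_of_le_rho (hν : 0 < ν) (hσ : 1/2 < σ)
    (hρ : ρ = (1/2) * (2/ν) ^ ((1:ℝ)/(2*σ - 1))) (ha : 0 < a) (haρ : a ≤ ρ)
    (hΦ : Φ = √(1 - ν^2/4 * a ^ (4*σ - 2))) (t : ℝ) {ℓ : ℕ} (hℓ : ℓ ≤ 1) :
    |deriv^[ℓ] (multiplier₁ ν σ a Φ) t|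
      ≤ 2 * rexp (-(ν/2) * t * a ^ (2*σ)) * a ^ (ℓ : ℝ) := by
  calc _ ≤ (ν/2 * a ^ (2*σ) + a * Φ) ^ ℓ * rexp (-(ν/2) * t * a ^ (2*σ)) :=
        abs_iterate_deriv_multiplier₁_le hν.le ha.le (hΦ ▸ sqrt_nonneg _) t hℓ
    _ ≤ 2 * a ^ (ℓ : ℝ) * rexp (-(ν/2) * t * a ^ (2*σ)) := by
        gcongr
        exact pow_rate_add_freq_le hν hσ hρ ha haρ hΦ hℓ
    _ = _ := by ring

theorem abs_iterate_deriv_multiplier₂_le_of_le_rho (hν : 0 < ν) (hσ : 1/2 < σ)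
    (hρ : ρ = (1/2) * (2/ν) ^ ((1:ℝ)/(2*σ - 1))) (ha : 0 < a) (haρ : a ≤ ρ)
    (hΦ : Φ = √(1 - ν^2/4 * a ^ (4*σ - 2))) (t : ℝ) {ℓ : ℕ} (hℓ : ℓ ≤ 1) :
    |deriv^[ℓ] (multiplier₂ ν σ a Φ) t|
      ≤ ν / phiLowerBound σ * rexp (-(ν/2) * t * a ^ (2*σ)) * a ^ ((ℓ : ℝ) + 1) := by
  have hφ₀ := phiLowerBound_pos hσ
  have hΦφ₀ : phiLowerBound σ ≤ Φ := hΦ ▸ (sqrt_one_sub_mem_Icc_phiLowerBound hν hσ hρ ha.le haρ).1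
  have hΦ0 : 0 < Φ := hφ₀.trans_le hΦφ₀
  calc _ ≤ ν * a / (2 * Φ) * ((ν/2 * a ^ (2*σ) + a * Φ) ^ ℓ * rexp (-(ν/2) * t * a ^ (2*σ))) :=
        abs_iterate_deriv_multiplier₂_le hν.le ha.le hΦ0 t hℓ
    _ ≤ ν * a / (2 * phiLowerBound σ) * (2 * a ^ (ℓ : ℝ) * rexp (-(ν/2) * t * a ^ (2*σ))) := by
        gcongr
        exact pow_rate_add_freq_le hν hσ hρ ha haρ hΦ hℓ
    _ = _ := by
        rw [rpow_add_one ha.ne']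
        field_simp

theorem abs_iterate_deriv_multiplier₃_le_of_le_rho (hν : 0 < ν) (hσ : 1/2 < σ)
    (hρ : ρ = (1/2) * (2/ν) ^ ((1:ℝ)/(2*σ - 1))) (ha : 0 < a) (haρ : a ≤ ρ)
    (hΦ : Φ = √(1 - ν^2/4 * a ^ (4*σ - 2))) (t : ℝ) {ℓ : ℕ} (hℓ : ℓ ≤ 1) :
    |deriv^[ℓ] (multiplier₃ ν σ a Φ) t|
      ≤ 2 / phiLowerBound σ * rexp (-(ν/2) * t * a ^ (2*σ)) * a ^ ((ℓ : ℝ) - 1) := by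
  have hφ₀ := phiLowerBound_pos hσ
  have hΦφ₀ : phiLowerBound σ ≤ Φ := hΦ ▸ (sqrt_one_sub_mem_Icc_phiLowerBound hν hσ hρ ha.le haρ).1
  have hΦ0 : 0 < Φ := hφ₀.trans_le hΦφ₀
  calc _ ≤ 1 / (a * Φ) * ((ν/2 * a ^ (2*σ) + a * Φ) ^ ℓ * rexp (-(ν/2) * t * a ^ (2*σ))) :=
        abs_iterate_deriv_multiplier₃_le hν.le ha.le hΦ0.le t hℓ
    _ ≤ 1 / (a * phiLowerBound σ) * (2 * a ^ (ℓ : ℝ) * rexp (-(ν/2) * t * a ^ (2*σ))) := by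
        gcongr
        exact pow_rate_add_freq_le hν hσ hρ ha haρ hΦ hℓ
    _ = _ := by
        rw [rpow_sub_one ha.ne']
        field_simp

end LowFrequencyMultipliers

theorem stmt5_general (n : ℕ) (ν σ : ℝ) (hν : 0 < ν)
    (hσ : σ ∈ Set.Ioc (1/2 : ℝ) 1) (ρ : ℝ)
    (hρ : ρ = (1/2) * (2/ν) ^ ((1:ℝ)/(2*σ - 1)))
    (φ : EuclideanSpace ℝ (Fin n) → ℝ)
    (hφ : ∀ ξ, φ ξ = Real.sqrt (1 - ν^2/4 * ‖ξ‖ ^ (4*σ - 2))) :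
    ∃ C > 0, ∃ c > 0, ∀ ℓ : ℕ, ℓ ≤ 1 → ∀ t : ℝ, 0 ≤ t →
      ∀ ξ : EuclideanSpace ℝ (Fin n), 0 < ‖ξ‖ → ‖ξ‖ ≤ ρ →
        |deriv^[ℓ] (fun s => Real.exp (-(ν/2) * s * ‖ξ‖ ^ (2*σ)) * Real.cos (s * ‖ξ‖ * φ ξ)) t|
            ≤ C * Real.exp (-c * (1 + t) * ‖ξ‖ ^ (2*σ)) * ‖ξ‖ ^ (ℓ:ℝ) ∧
        |deriv^[ℓ] (fun s => Real.exp (-(ν/2) * s * ‖ξ‖ ^ (2*σ)) * ν * ‖ξ‖ *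
            Real.sin (s * ‖ξ‖ * φ ξ) / (2 * φ ξ)) t|
            ≤ C * Real.exp (-c * (1 + t) * ‖ξ‖ ^ (2*σ)) * ‖ξ‖ ^ ((ℓ:ℝ) + 1) ∧
        |deriv^[ℓ] (fun s => Real.exp (-(ν/2) * s * ‖ξ‖ ^ (2*σ)) *
            Real.sin (s * ‖ξ‖ * φ ξ) / (‖ξ‖ * φ ξ)) t|
            ≤ C * Real.exp (-c * (1 + t) * ‖ξ‖ ^ (2*σ)) * ‖ξ‖ ^ ((ℓ:ℝ) - 1) := by
  obtain ⟨hσ, -⟩ := hσ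
  have hφ₀ := phiLowerBound_pos hσ
  set K := (2 + ν) / phiLowerBound σ
  have hK : ∀ k, k ≤ 2 + ν → k / phiLowerBound σ ≤ K := fun k hk =>
    div_le_div_of_nonneg_right hk hφ₀.le
  have hK₁ : 2 ≤ K :=
    (le_div_self (by norm_num) hφ₀ (phiLowerBound_le_one σ)).trans (hK 2 (by linarith))
  refine ⟨K * rexp (ν/2 * ρ ^ (2*σ)), by positivity, ν/2, by positivity,
    fun ℓ hℓ t _ ξ hξ hξρ => ?_⟩
  have hE : rexp (-(ν/2) * t * ‖ξ‖ ^ (2*σ))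
      ≤ rexp (ν/2 * ρ ^ (2*σ)) * rexp (-(ν/2) * (1 + t) * ‖ξ‖ ^ (2*σ)) :=
    exp_neg_mul_le_exp_mul_exp_neg_mul (by positivity)
      (rpow_le_rpow hξ.le hξρ (by linarith)) t
  have hC : ∀ {k p X : ℝ}, 0 ≤ k → k ≤ K → |X| ≤ k * rexp (-(ν/2) * t * ‖ξ‖ ^ (2*σ)) * ‖ξ‖ ^ p →
      |X| ≤ K * rexp (ν/2 * ρ ^ (2*σ)) * rexp (-(ν/2) * (1 + t) * ‖ξ‖ ^ (2*σ)) * ‖ξ‖ ^ p :=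
    fun hk hkK hX => hX.trans (by rw [mul_assoc K]; gcongr)
  exact ⟨hC (by norm_num) hK₁
      (abs_iterate_deriv_multiplier₁_le_of_le_rho hν hσ hρ hξ hξρ (hφ ξ) t hℓ),
    hC (by positivity) (hK ν (by linarith))
      (abs_iterate_deriv_multiplier₂_le_of_le_rho hν hσ hρ hξ hξρ (hφ ξ) t hℓ),
    hC (by positivity) (hK 2 (by linarith))
      (abs_iterate_deriv_multiplier₃_le_of_le_rho hν hσ hρ hξ hξρ (hφ ξ) t hℓ)⟩

/-- Pointwise low-frequency estimates for the multipliers `𝒦₁`, `𝒦₂`, `𝒦₃` arising from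
the structurally damped wave equation with `σ ∈ (1/2,1]`, for `ℓ = 0, 1` time derivatives. -/
theorem stmt5 (n : ℕ) (hn : 1 ≤ n) (ν σ : ℝ) (hν : 0 < ν)
    (hσ : σ ∈ Set.Ioc (1/2 : ℝ) 1) (ρ : ℝ)
    (hρ : ρ = (1/2) * (2/ν) ^ ((1:ℝ)/(2*σ - 1)))
    (φ : EuclideanSpace ℝ (Fin n) → ℝ)
    (hφ : ∀ ξ, φ ξ = Real.sqrt (1 - ν^2/4 * ‖ξ‖ ^ (4*σ - 2))) :
    ∃ C > 0, ∃ c > 0, ∀ ℓ : ℕ, ℓ ≤ 1 → ∀ t : ℝ, 0 ≤ t →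
      ∀ ξ : EuclideanSpace ℝ (Fin n), 0 < ‖ξ‖ → ‖ξ‖ ≤ ρ →
        |deriv^[ℓ] (fun s => Real.exp (-(ν/2) * s * ‖ξ‖ ^ (2*σ)) * Real.cos (s * ‖ξ‖ * φ ξ)) t|
            ≤ C * Real.exp (-c * (1 + t) * ‖ξ‖ ^ (2*σ)) * ‖ξ‖ ^ (ℓ:ℝ) ∧
        |deriv^[ℓ] (fun s => Real.exp (-(ν/2) * s * ‖ξ‖ ^ (2*σ)) * ν * ‖ξ‖ *
            Real.sin (s * ‖ξ‖ * φ ξ) / (2 * φ ξ)) t|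
            ≤ C * Real.exp (-c * (1 + t) * ‖ξ‖ ^ (2*σ)) * ‖ξ‖ ^ ((ℓ:ℝ) + 1) ∧
        |deriv^[ℓ] (fun s => Real.exp (-(ν/2) * s * ‖ξ‖ ^ (2*σ)) *
            Real.sin (s * ‖ξ‖ * φ ξ) / (‖ξ‖ * φ ξ)) t|
            ≤ C * Real.exp (-c * (1 + t) * ‖ξ‖ ^ (2*σ)) * ‖ξ‖ ^ ((ℓ:ℝ) - 1) :=
  stmt5_general n ν σ hν hσ ρ hρ φ hφ
end

section
/- Fix n ≥ 1, ν > 0 and σ ∈ (0,1/2). There exist constants C > 0 and c > 0 such that for every t ≥ 0 and every ξ ∈ ℝⁿ with 0 < |ξ| ≤ ρ: |𝒥₁(t,ξ) − e^{−(t/ν)|ξ|^{2(1−σ)}}| ≤ C e^{−c(1+t)|ξ|^{2(1−σ)}} ( t|ξ|^{2(2−3σ)} + |ξ|^{2(1−2σ)} ) and |𝒥₂(t,ξ) − e^{−(t/ν)|ξ|^{2(1−σ)}}/(ν|ξ|^{2σ})| ≤ C e^{−c(1+t)|ξ|^{2(1−σ)}} ( t|ξ|^{2(2−3σ)−2σ}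 + |ξ|^{2(1−2σ)−2σ} ). -/
/-!
Write `a = (ν/2)|ξ|^{2σ}`, `Q = |ξ|²` and `D = √(a² - Q)`, so that `λ± = -a ± D` and the parabolic
rate is `|ξ|^{2(1-σ)}/ν = Q/(2a)`. On `|ξ| ≤ ρ` one has `Q ≤ x a²` for a fixed `x < 1`, hence
`D ≥ √(1 - x) a`. Since `a - D = Q/(a + D)`, the gap `-λ₊ = a - D` lies between `Q/(2a)` and
`Q/a` and exceeds the parabolic rate by at most `Q²/(2a³)`. The first bound controls the amplitudes
`-λ₋/(λ₊ - λ₋) - 1` and `a/D - 1` by `Q/a²`; the second gives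
`0 ≤ e^{-tQ/(2a)} - e^{λ₊t} ≤ t Q²/(2a³) e^{-tQ/(2a)}`. Finally the parabolic rate is bounded on
`|ξ| ≤ ρ`, so `e^{-tQ/(2a)}` is at most a constant times `e^{-(1+t)Q/(2a)}`.
-/

open Real

lemma rpow_eq_sq_pow_div_rpow_pow {r : ℝ} (hr : 0 < r) (σ : ℝ) (k m : ℕ) (e : ℝ)
    (he : e = 2 * (k - m * σ)) : r ^ e = (r ^ 2) ^ k / (r ^ (2 * σ)) ^ m := by
  rw [eq_div_iff (by positivity), ← rpow_mul_natCast hr.le, ← rpow_add hr, ← pow_mul,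
    ← rpow_natCast, he]
  push_cast; ring_nf

lemma sq_le_of_le_half_rpow {ν σ r : ℝ} (hν : 0 < ν) (hσ : 2 * σ < 1) (hr : 0 < r)
    (hrρ : r ≤ 1 / 2 * (ν / 2) ^ (1 / (1 - 2 * σ))) :
    r ^ 2 ≤ (1 / 2) ^ (2 * (1 - 2 * σ)) * (ν / 2 * r ^ (2 * σ)) ^ 2 := by
  have hσ' : 1 - 2 * σ ≠ 0 := by linarith
  have hρ : (1 / 2 * (ν / 2) ^ (1 / (1 - 2 * σ))) ^ (2 * (1 - 2 * σ))
      = (1 / 2) ^ (2 * (1 - 2 * σ)) * (ν / 2) ^ 2 := by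
    rw [mul_rpow (by norm_num) (by positivity), ← rpow_mul (by positivity),
      show 1 / (1 - 2 * σ) * (2 * (1 - 2 * σ)) = (2 : ℕ) by field_simp; norm_num, rpow_natCast]
  calc r ^ 2 = r ^ (2 * (1 - 2 * σ)) * (r ^ (2 * σ)) ^ 2 := by
        rw [rpow_eq_sq_pow_div_rpow_pow hr σ 1 2 _ (by push_cast; ring)]
        field_simp
    _ ≤ (1 / 2 * (ν / 2) ^ (1 / (1 - 2 * σ))) ^ (2 * (1 - 2 * σ)) * (r ^ (2 * σ)) ^ 2 := by
        gcongr
    _ = _ := by rw [hρ]; ring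

lemma mul_le_sqrt_sub_of_le_mul_sq {a Q x : ℝ} (ha : 0 ≤ a) (hQx : Q ≤ x * a ^ 2) :
    √(1 - x) * a ≤ √(a ^ 2 - Q) := by
  calc √(1 - x) * a = √((1 - x) * a ^ 2) := by rw [sqrt_mul' _ (sq_nonneg a), sqrt_sq ha]
    _ ≤ √(a ^ 2 - Q) := sqrt_le_sqrt (by linarith)

section RootGap

variable {a Q D : ℝ}

lemma div_two_mul_le_sub (ha : 0 < a) (hDQ : D ^ 2 = a ^ 2 - Q) :
    Q / (2 * a) ≤ a - D := by
  rw [div_le_iff₀ (by positivity)]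
  nlinarith [sq_nonneg (a - D)]

lemma sub_le_div (ha : 0 < a) (hD : 0 ≤ D) (hDQ : D ^ 2 = a ^ 2 - Q) (hQ : 0 ≤ Q) :
    a - D ≤ Q / a := by
  have hDa : D ≤ a := by nlinarith
  rw [le_div_iff₀ ha]
  nlinarith [mul_nonneg (sub_nonneg.2 hDa) hD]

lemma sub_sub_div_le (ha : 0 < a) (hD : 0 ≤ D) (hDQ : D ^ 2 = a ^ 2 - Q) (hQ : 0 ≤ Q) :
    a - D - Q / (2 * a) ≤ Q ^ 2 / (2 * a ^ 3) := by
  have hDa : D ≤ a := by nlinarith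
  calc a - D - Q / (2 * a) = (a - D) ^ 2 / (2 * a) := by
        rw [show Q = (a - D) * (a + D) by linear_combination hDQ]
        field_simp
        ring
    _ ≤ (Q / a) ^ 2 / (2 * a) := by
        gcongr
        exact sub_le_div ha hD hDQ hQ
    _ = Q ^ 2 / (2 * a ^ 3) := by field_simp

end RootGap

lemma exp_mul_sub_exp_mul_le (κ μ t : ℝ) :
    exp (μ * t) - exp (κ * t) ≤ t * (μ - κ) * exp (μ * t) := by
  have h := one_sub_le_exp_neg ((μ - κ) * t)
  have hsplit : exp (κ * t) = exp (μ * t) * exp (-((μ - κ) * t)) := by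
    rw [← exp_add]; ring_nf
  rw [hsplit]
  nlinarith [exp_pos (μ * t)]

lemma abs_mul_sub_le {k X Y : ℝ} (hk : 1 ≤ k) (hX : 0 ≤ X) (hXY : X ≤ Y) :
    |k * X - Y| ≤ (k - 1) * Y + (Y - X) := by
  rw [abs_le]
  constructor <;> nlinarith

lemma add_mul_le_of_coeff_le {A B S u v Y E Z : ℝ} (hA : A ≤ S) (hB : B ≤ S) (hu : 0 ≤ u) (hv : 0 ≤ v)
    (hS : 0 ≤ S) (hY : 0 ≤ Y) (hYZ : Y ≤ E * Z) : (A * u + B * v) * Y ≤ E * S * Z * (v + u) := by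
  have hSuv : 0 ≤ S * u + S * v := by positivity
  calc (A * u + B * v) * Y ≤ (S * u + S * v) * (E * Z) := by gcongr
    _ = E * S * Z * (v + u) := by ring

section Multipliers

variable {a Q D s t lp lm : ℝ}

lemma exp_root_le (ha : 0 < a) (hDQ : D ^ 2 = a ^ 2 - Q) (ht : 0 ≤ t) (hlp : lp = -a + D) :
    exp (lp * t) ≤ exp (-(Q / (2 * a)) * t) := by
  have := div_two_mul_le_sub ha hDQ
  rw [hlp]
  gcongr
  linarith

lemma exp_sub_exp_root_le (ha : 0 < a) (hD : 0 ≤ D) (hDQ : D ^ 2 = a ^ 2 - Q) (hQ : 0 ≤ Q)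
    (ht : 0 ≤ t) (hlp : lp = -a + D) :
    exp (-(Q / (2 * a)) * t) - exp (lp * t)
      ≤ t * (Q ^ 2 / (2 * a ^ 3)) * exp (-(Q / (2 * a)) * t) := by
  have hgap := sub_sub_div_le ha hD hDQ hQ
  calc exp (-(Q / (2 * a)) * t) - exp (lp * t)
      ≤ t * (-(Q / (2 * a)) - lp) * exp (-(Q / (2 * a)) * t) := exp_mul_sub_exp_mul_le _ _ _
    _ ≤ t * (Q ^ 2 / (2 * a ^ 3)) * exp (-(Q / (2 * a)) * t) := by
        rw [hlp]
        gcongr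
        linarith

lemma abs_first_multiplier_sub_le (ha : 0 < a) (hQ : 0 ≤ Q) (hs : 0 < s)
    (hDQ : D ^ 2 = a ^ 2 - Q) (hsD : s * a ≤ D) (ht : 0 ≤ t) (hlp : lp = -a + D)
    (hlm : lm = -a - D) :
    |-lm * exp (lp * t) / (lp - lm) - exp (-(Q / (2 * a)) * t)|
      ≤ (Q / (2 * s * a ^ 2) + t * (Q ^ 2 / (2 * a ^ 3))) * exp (-(Q / (2 * a)) * t) := by
  have hD : 0 < D := (mul_pos hs ha).trans_le hsD
  have hDa : D ≤ a := by nlinarith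
  have hamp : (a + D) / (2 * D) - 1 ≤ Q / (2 * s * a ^ 2) := by
    calc (a + D) / (2 * D) - 1 = (a - D) / (2 * D) := by field_simp; ring
      _ ≤ (Q / a) / (2 * (s * a)) := by
          gcongr
          exact sub_le_div ha hD.le hDQ hQ
      _ = Q / (2 * s * a ^ 2) := by field_simp
  have hk : 1 ≤ (a + D) / (2 * D) := by rw [le_div_iff₀ (by positivity)]; linarith
  have hlpm : lp - lm = 2 * D := by rw [hlp, hlm]; ring
  rw [hlpm, show -lm = a + D by rw [hlm]; ring, mul_div_right_comm]
  calc _ ≤ ((a + D) / (2 * D) - 1) * exp (-(Q / (2 * a)) * t)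
        + (exp (-(Q / (2 * a)) * t) - exp (lp * t)) :=
        abs_mul_sub_le hk (exp_pos _).le (exp_root_le ha hDQ ht hlp)
    _ ≤ _ := by
        rw [add_mul]
        gcongr
        exact exp_sub_exp_root_le ha hD.le hDQ hQ ht hlp

lemma abs_second_multiplier_sub_le (ha : 0 < a) (hQ : 0 ≤ Q) (hs : 0 < s)
    (hDQ : D ^ 2 = a ^ 2 - Q) (hsD : s * a ≤ D) (ht : 0 ≤ t) (hlp : lp = -a + D)
    (hlm : lm = -a - D) :
    |exp (lp * t) / (lp - lm) - exp (-(Q / (2 * a)) * t) / (2 * a)|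
      ≤ (Q / (2 * s * a ^ 3) + t * (Q ^ 2 / (4 * a ^ 4))) * exp (-(Q / (2 * a)) * t) := by
  have hD : 0 < D := (mul_pos hs ha).trans_le hsD
  have hDa : D ≤ a := by nlinarith
  have hamp : a / D - 1 ≤ Q / (s * a ^ 2) := by
    calc a / D - 1 = (a - D) / D := by field_simp
      _ ≤ (Q / a) / (s * a) := by
          gcongr
          exact sub_le_div ha hD.le hDQ hQ
      _ = Q / (s * a ^ 2) := by field_simp
  have hk : 1 ≤ a / D := by rw [le_div_iff₀ hD]; linarith
  have hlpm : lp - lm = 2 * D := by rw [hlp, hlm]; ring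
  rw [hlpm, show exp (lp * t) / (2 * D) - exp (-(Q / (2 * a)) * t) / (2 * a)
      = (a / D * exp (lp * t) - exp (-(Q / (2 * a)) * t)) / (2 * a) by field_simp,
    abs_div, abs_of_pos (by positivity : (0 : ℝ) < 2 * a), div_le_iff₀ (by positivity)]
  calc _ ≤ (a / D - 1) * exp (-(Q / (2 * a)) * t) + (exp (-(Q / (2 * a)) * t) - exp (lp * t)) :=
        abs_mul_sub_le hk (exp_pos _).le (exp_root_le ha hDQ ht hlp)
    _ ≤ Q / (s * a ^ 2) * exp (-(Q / (2 * a)) * t)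
        + t * (Q ^ 2 / (2 * a ^ 3)) * exp (-(Q / (2 * a)) * t) := by
        gcongr
        exact exp_sub_exp_root_le ha hD.le hDQ hQ ht hlp
    _ = _ := by field_simp; ring

end Multipliers

theorem exists_multiplier_bounds {ν x M : ℝ} (hν : 0 < ν) (hx : x < 1) :
    ∃ C > 0, ∀ t : ℝ, 0 ≤ t → ∀ P Q : ℝ, 0 < P → 0 < Q → Q ≤ x * (ν / 2 * P) ^ 2 → Q / P ≤ M →
      ∀ lp lm : ℝ, lp = -(ν / 2) * P + √(ν ^ 2 / 4 * P ^ 2 - Q) →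
        lm = -(ν / 2) * P - √(ν ^ 2 / 4 * P ^ 2 - Q) →
        |-lm * exp (lp * t) / (lp - lm) - exp (-(t / ν) * (Q / P))|
            ≤ C * exp (-(1 / ν) * (1 + t) * (Q / P)) * (t * (Q ^ 2 / P ^ 3) + Q / P ^ 2) ∧
        |exp (lp * t) / (lp - lm) - exp (-(t / ν) * (Q / P)) / (ν * P)|
            ≤ C * exp (-(1 / ν) * (1 + t) * (Q / P)) * (t * (Q ^ 2 / P ^ 4) + Q / P ^ 3) := by
  set s := √(1 - x)
  have hs : 0 < s := sqrt_pos.2 (by linarith)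
  obtain ⟨h₁, h₂, h₃, h₄⟩ :
      0 < 2 / (ν ^ 2 * s) ∧ 0 < 4 / ν ^ 3 ∧ 0 < 4 / (ν ^ 3 * s) ∧ 0 < 4 / ν ^ 4 :=
    ⟨by positivity, by positivity, by positivity, by positivity⟩
  set S := 2 / (ν ^ 2 * s) + 4 / ν ^ 3 + 4 / (ν ^ 3 * s) + 4 / ν ^ 4
  refine ⟨exp (M / ν) * S, by positivity, fun t ht P Q hP hQ hQx hM lp lm hlp hlm => ?_⟩
  set a := ν / 2 * P with ha_def
  have ha : 0 < a := by positivity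
  have hDa : √(ν ^ 2 / 4 * P ^ 2 - Q) = √(a ^ 2 - Q) := by rw [ha_def]; ring_nf
  rw [hDa] at hlp hlm
  have hDQ : √(a ^ 2 - Q) ^ 2 = a ^ 2 - Q := sq_sqrt (by nlinarith)
  have hsD := mul_le_sqrt_sub_of_le_mul_sq ha.le hQx
  have hrate : -(t / ν) * (Q / P) = -(Q / (2 * a)) * t := by rw [ha_def]; field_simp
  have hY : exp (-(Q / (2 * a)) * t) ≤ exp (M / ν) * exp (-(1 / ν) * (1 + t) * (Q / P)) := by
    rw [← exp_add, ← hrate]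
    have : Q / P / ν ≤ M / ν := by gcongr
    gcongr
    linear_combination this
  have hlp' : lp = -a + √(a ^ 2 - Q) := hlp.trans (by ring)
  have hlm' : lm = -a - √(a ^ 2 - Q) := hlm.trans (by ring)
  rw [hrate, show ν * P = 2 * a by rw [ha_def]; ring]
  constructor
  · calc _ ≤ _ := abs_first_multiplier_sub_le ha hQ.le hs hDQ hsD ht hlp' hlm'
      _ = (2 / (ν ^ 2 * s) * (Q / P ^ 2) + 4 / ν ^ 3 * (t * (Q ^ 2 / P ^ 3)))
          * exp (-(Q / (2 * a)) * t) := by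
          rw [ha_def]; field_simp; ring
      _ ≤ _ := add_mul_le_of_coeff_le (by linarith) (by linarith) (by positivity) (by positivity)
          (by positivity) (exp_pos _).le hY
  · calc _ ≤ _ := abs_second_multiplier_sub_le ha hQ.le hs hDQ hsD ht hlp' hlm'
      _ = (4 / (ν ^ 3 * s) * (Q / P ^ 3) + 4 / ν ^ 4 * (t * (Q ^ 2 / P ^ 4)))
          * exp (-(Q / (2 * a)) * t) := by
          rw [ha_def]; field_simp; ring
      _ ≤ _ := add_mul_le_of_coeff_le (by linarith) (by linarith) (by positivity) (by positivity)
          (by positivity) (exp_pos _).le hY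

theorem stmt6_general (n : ℕ) (ν σ : ℝ) (hν : 0 < ν)
    (hσ : σ ∈ Set.Ioo (0:ℝ) (1/2)) (ρ : ℝ)
    (hρ : ρ = (1/2) * (ν/2) ^ ((1:ℝ)/(1 - 2*σ)))
    (lp lm : EuclideanSpace ℝ (Fin n) → ℝ)
    (hlp : ∀ ξ, lp ξ = -(ν/2) * ‖ξ‖ ^ (2*σ) + Real.sqrt (ν^2/4 * ‖ξ‖ ^ (4*σ) - ‖ξ‖^2))
    (hlm : ∀ ξ, lm ξ = -(ν/2) * ‖ξ‖ ^ (2*σ) - Real.sqrt (ν^2/4 * ‖ξ‖ ^ (4*σ) - ‖ξ‖^2)) :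
    ∃ C > 0, ∃ c > 0, ∀ t : ℝ, 0 ≤ t →
      ∀ ξ : EuclideanSpace ℝ (Fin n), 0 < ‖ξ‖ → ‖ξ‖ ≤ ρ →
        |(-(lm ξ) * Real.exp (lp ξ * t) / (lp ξ - lm ξ)) - Real.exp (-(t/ν) * ‖ξ‖ ^ (2*(1 - σ)))|
            ≤ C * Real.exp (-c * (1 + t) * ‖ξ‖ ^ (2*(1 - σ))) *
              (t * ‖ξ‖ ^ (2*(2 - 3*σ)) + ‖ξ‖ ^ (2*(1 - 2*σ))) ∧
        |(Real.exp (lp ξ * t) / (lp ξ - lm ξ)) -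
            Real.exp (-(t/ν) * ‖ξ‖ ^ (2*(1 - σ))) / (ν * ‖ξ‖ ^ (2*σ))|
            ≤ C * Real.exp (-c * (1 + t) * ‖ξ‖ ^ (2*(1 - σ))) *
              (t * ‖ξ‖ ^ (2*(2 - 3*σ) - 2*σ) + ‖ξ‖ ^ (2*(1 - 2*σ) - 2*σ)) := by
  obtain ⟨-, hσ1⟩ := hσ
  obtain ⟨C, hC, hbound⟩ := exists_multiplier_bounds (M := ρ ^ (2 * (1 - σ))) hν
    (rpow_lt_one (by norm_num) (by norm_num) (by linarith) : (1 / 2 : ℝ) ^ (2 * (1 - 2 * σ)) < 1)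
  refine ⟨C, hC, 1 / ν, by positivity, fun t ht ξ hξ hξρ => ?_⟩
  have hpow : ∀ (k m : ℕ) (e : ℝ), e = 2 * (k - m * σ) →
      ‖ξ‖ ^ e = (‖ξ‖ ^ 2) ^ k / (‖ξ‖ ^ (2 * σ)) ^ m :=
    rpow_eq_sq_pow_div_rpow_pow hξ σ
  have hrate := hpow 1 1 (2 * (1 - σ)) (by push_cast; ring)
  have h4σ : ‖ξ‖ ^ (4 * σ) = (‖ξ‖ ^ (2 * σ)) ^ 2 := by
    rw [← rpow_mul_natCast hξ.le]; ring_nf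
  rw [hrate, hpow 2 3 (2 * (2 - 3 * σ)) (by push_cast; ring),
    hpow 1 2 (2 * (1 - 2 * σ)) (by push_cast; ring),
    hpow 2 4 (2 * (2 - 3 * σ) - 2 * σ) (by push_cast; ring),
    hpow 1 3 (2 * (1 - 2 * σ) - 2 * σ) (by push_cast; ring)]
  simp only [pow_one] at hrate ⊢
  refine hbound t ht _ _ (by positivity) (by positivity)
    (sq_le_of_le_half_rpow hν (by linarith) hξ (hρ ▸ hξρ))
    (hrate ▸ rpow_le_rpow hξ.le hξρ (by linarith)) _ _ ?_ ?_
  · rw [hlp, h4σ]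
  · rw [hlm, h4σ]

/-- Low-frequency approximation of the multipliers `𝒥₁` and `𝒥₂` by the parabolic kernels
`e^{-(t/ν)|ξ|^{2(1-σ)}}` and `e^{-(t/ν)|ξ|^{2(1-σ)}}/(ν|ξ|^{2σ})` for `σ ∈ (0,1/2)`. -/
theorem stmt6 (n : ℕ) (hn : 1 ≤ n) (ν σ : ℝ) (hν : 0 < ν)
    (hσ : σ ∈ Set.Ioo (0:ℝ) (1/2)) (ρ : ℝ)
    (hρ : ρ = (1/2) * (ν/2) ^ ((1:ℝ)/(1 - 2*σ)))
    (lp lm : EuclideanSpace ℝ (Fin n) → ℝ)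
    (hlp : ∀ ξ, lp ξ = -(ν/2) * ‖ξ‖ ^ (2*σ) + Real.sqrt (ν^2/4 * ‖ξ‖ ^ (4*σ) - ‖ξ‖^2))
    (hlm : ∀ ξ, lm ξ = -(ν/2) * ‖ξ‖ ^ (2*σ) - Real.sqrt (ν^2/4 * ‖ξ‖ ^ (4*σ) - ‖ξ‖^2)) :
    ∃ C > 0, ∃ c > 0, ∀ t : ℝ, 0 ≤ t →
      ∀ ξ : EuclideanSpace ℝ (Fin n), 0 < ‖ξ‖ → ‖ξ‖ ≤ ρ →
        |(-(lm ξ) * Real.exp (lp ξ * t) / (lp ξ - lm ξ)) - Real.exp (-(t/ν) * ‖ξ‖ ^ (2*(1 - σ)))|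
            ≤ C * Real.exp (-c * (1 + t) * ‖ξ‖ ^ (2*(1 - σ))) *
              (t * ‖ξ‖ ^ (2*(2 - 3*σ)) + ‖ξ‖ ^ (2*(1 - 2*σ))) ∧
        |(Real.exp (lp ξ * t) / (lp ξ - lm ξ)) -
            Real.exp (-(t/ν) * ‖ξ‖ ^ (2*(1 - σ))) / (ν * ‖ξ‖ ^ (2*σ))|
            ≤ C * Real.exp (-c * (1 + t) * ‖ξ‖ ^ (2*(1 - σ))) *
              (t * ‖ξ‖ ^ (2*(2 - 3*σ) - 2*σ) + ‖ξ‖ ^ (2*(1 - 2*σ) - 2*σ)) :=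
  stmt6_general n ν σ hν hσ ρ hρ lp lm hlp hlm
end

section
/- Fix n ≥ 1, ν > 0 and σ ∈ (1/2,1]. There exist constants C > 0 and c > 0 such that for every t ≥ 0 and every ξ ∈ ℝⁿ with 0 < |ξ| ≤ ρ: |𝒦₁(t,ξ) − e^{−(ν/2)t|ξ|^{2σ}} cos(t|ξ|)| ≤ C e^{−c(1+t)|ξ|^{2σ}} t |ξ|^{4σ−1}. -/
/-!
Since `1 - √(1 - x) ≤ x` for `x ≥ 0`, we have `1 - φ_σ(ξ) ≤ (ν²/4)|ξ|^{4σ-2}`; as the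
cosine is 1-Lipschitz, the two cosines differ by at most `t|ξ|(1 - φ_σ(ξ)) ≤ (ν²/4) t |ξ|^{4σ-1}`.
Half of the damping `e^{-(ν/2)t|ξ|^{2σ}}` is traded for the factor `e^{-(ν/4)(1+t)|ξ|^{2σ}}`,
at the price of the constant `e^{(ν/4)ρ^{2σ}}`.
-/

open Real

lemma one_sub_sqrt_one_sub_le {x : ℝ} (hx : 0 ≤ x) : 1 - √(1 - x) ≤ x := by
  rcases le_or_gt x 1 with hx1 | hx1
  · have : 1 - x ≤ √(1 - x) := by
      rw [Real.le_sqrt (by linarith) (by linarith)]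
      nlinarith
    linarith
  · linarith [Real.sqrt_nonneg (1 - x)]

lemma abs_cos_mul_sub_cos_le {u φ : ℝ} (hu : 0 ≤ u) (hφ : φ ≤ 1) :
    |cos (u * φ) - cos u| ≤ u * (1 - φ) :=
  calc |cos (u * φ) - cos u| ≤ |u * φ - u| := abs_cos_sub_cos_le _ _
    _ = u * (1 - φ) := by
      rw [show u * φ - u = -(u * (1 - φ)) by ring, abs_neg,
        abs_of_nonneg (mul_nonneg hu (by linarith))]

lemma exp_neg_mul_le_exp_mul_exp_neg {a t s S : ℝ} (ha : 0 ≤ a) (ht : 0 ≤ t) (hs : 0 ≤ s)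
    (hsS : s ≤ S) :
    exp (-(a / 2) * t * s) ≤ exp (a / 4 * S) * exp (-(a / 4) * (1 + t) * s) := by
  rw [← exp_add, exp_le_exp]
  nlinarith [mul_nonneg ha (mul_nonneg ht hs)]

theorem stmt8_general (n : ℕ) (ν σ : ℝ) (hν : 0 < ν)
    (hσ : σ ∈ Set.Ioc (1/2 : ℝ) 1) (ρ : ℝ)
    (φ : EuclideanSpace ℝ (Fin n) → ℝ)
    (hφ : ∀ ξ, φ ξ = Real.sqrt (1 - ν^2/4 * ‖ξ‖ ^ (4*σ - 2))) :
    ∃ C > 0, ∃ c > 0, ∀ t : ℝ, 0 ≤ t →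
      ∀ ξ : EuclideanSpace ℝ (Fin n), 0 < ‖ξ‖ → ‖ξ‖ ≤ ρ →
        |Real.exp (-(ν/2) * t * ‖ξ‖ ^ (2*σ)) * Real.cos (t * ‖ξ‖ * φ ξ) -
            Real.exp (-(ν/2) * t * ‖ξ‖ ^ (2*σ)) * Real.cos (t * ‖ξ‖)|
          ≤ C * Real.exp (-c * (1 + t) * ‖ξ‖ ^ (2*σ)) * t * ‖ξ‖ ^ (4*σ - 1) := by
  have hσ0 : 0 ≤ 2 * σ := by linarith [hσ.1]
  refine ⟨ν^2/4 * exp (ν/4 * ρ ^ (2*σ)), by positivity, ν/4, by positivity,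
    fun t ht ξ hξ hξρ => ?_⟩
  set E := exp (-(ν/2) * t * ‖ξ‖ ^ (2*σ))
  have hgap_nonneg : 0 ≤ ν^2/4 * ‖ξ‖ ^ (4*σ - 2) := by positivity
  have hφ_gap : 1 - φ ξ ≤ ν^2/4 * ‖ξ‖ ^ (4*σ - 2) := hφ ξ ▸ one_sub_sqrt_one_sub_le hgap_nonneg
  have hφ_le_one : φ ξ ≤ 1 := hφ ξ ▸ sqrt_le_one.mpr (by linarith)
  have hpow : ‖ξ‖ ^ (4*σ - 1) = ‖ξ‖ ^ (4*σ - 2) * ‖ξ‖ := by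
    rw [← rpow_add_one hξ.ne']; ring_nf
  calc |E * cos (t * ‖ξ‖ * φ ξ) - E * cos (t * ‖ξ‖)|
      = E * |cos (t * ‖ξ‖ * φ ξ) - cos (t * ‖ξ‖)| := by
        rw [← mul_sub, abs_mul, abs_of_pos (exp_pos _)]
    _ ≤ E * (t * ‖ξ‖ * (ν^2/4 * ‖ξ‖ ^ (4*σ - 2))) := by
        gcongr
        exact (abs_cos_mul_sub_cos_le (by positivity) hφ_le_one).trans (by gcongr)
    _ = ν^2/4 * E * t * ‖ξ‖ ^ (4*σ - 1) := by rw [hpow]; ring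
    _ ≤ ν^2/4 * (exp (ν/4 * ρ ^ (2*σ)) * exp (-(ν/4) * (1 + t) * ‖ξ‖ ^ (2*σ)))
          * t * ‖ξ‖ ^ (4*σ - 1) := by
        gcongr
        exact exp_neg_mul_le_exp_mul_exp_neg hν.le ht (by positivity)
          (rpow_le_rpow hξ.le hξρ hσ0)
    _ = _ := by ring

/-- Low-frequency approximation of the multiplier `𝒦₁` by the hybrid kernel
`e^{-(ν/2)t|ξ|^{2σ}} cos(t|ξ|)` for `σ ∈ (1/2,1]`. -/
theorem stmt8 (n : ℕ) (hn : 1 ≤ n) (ν σ : ℝ) (hν : 0 < ν)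
    (hσ : σ ∈ Set.Ioc (1/2 : ℝ) 1) (ρ : ℝ)
    (hρ : ρ = (1/2) * (2/ν) ^ ((1:ℝ)/(2*σ - 1)))
    (φ : EuclideanSpace ℝ (Fin n) → ℝ)
    (hφ : ∀ ξ, φ ξ = Real.sqrt (1 - ν^2/4 * ‖ξ‖ ^ (4*σ - 2))) :
    ∃ C > 0, ∃ c > 0, ∀ t : ℝ, 0 ≤ t →
      ∀ ξ : EuclideanSpace ℝ (Fin n), 0 < ‖ξ‖ → ‖ξ‖ ≤ ρ →
        |Real.exp (-(ν/2) * t * ‖ξ‖ ^ (2*σ)) * Real.cos (t * ‖ξ‖ * φ ξ) -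
            Real.exp (-(ν/2) * t * ‖ξ‖ ^ (2*σ)) * Real.cos (t * ‖ξ‖)|
          ≤ C * Real.exp (-c * (1 + t) * ‖ξ‖ ^ (2*σ)) * t * ‖ξ‖ ^ (4*σ - 1) :=
  stmt8_general n ν σ hν hσ ρ φ hφ
end

section
/- Fix n ≥ 1, ν > 0 and σ ∈ (1/2,1]. There exist constants C > 0 and c > 0 such that for every t ≥ 0 and every ξ ∈ ℝⁿ with 0 < |ξ| ≤ ρ: |𝒦₃(t,ξ) − e^{−(ν/2)t|ξ|^{2σ}} sin(t|ξ|)/|ξ|| ≤ C e^{−c(1+t)|ξ|^{2σ}} ( t|ξ|^{4σ−2} + |ξ|^{4σ−3} ). -/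
/-!
With `q = (ν/2)|ξ|^{2σ-1}` one has `φ = √(1 - q²)`, and `|ξ| ≤ ρ` says exactly that
`q ≤ (1/2)^{2σ-1} < 1`; hence `φ` is bounded below on the whole low-frequency ball and
`1 - φ ≤ q²`. With `x = t|ξ|` the difference of the two kernels is
`e^{-(ν/2)t|ξ|^{2σ}} (sin (xφ) - φ sin x) / (|ξ|φ)`, and `|sin (xφ) - φ sin x| ≤ (x + 1)(1 - φ)`
because `sin` is 1-Lipschitz. Half of the damping factor, `e^{-(ν/4)t|ξ|^{2σ}}`, is then traded for
`e^{-(ν/4)(1+t)|ξ|^{2σ}}` at the price of the constant `e^{(ν/4)ρ^{2σ}}`.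
-/


open Real

lemma abs_sin_mul_sub_mul_sin_le {x p : ℝ} (hx : 0 ≤ x) (hp : p ≤ 1) :
    |sin (x * p) - p * sin x| ≤ (x + 1) * (1 - p) := by
  have hlip : |sin (x * p) - sin x| ≤ x * (1 - p) := by
    calc |sin (x * p) - sin x| ≤ |x * p - x| := abs_sin_sub_sin_le _ _
      _ = x * (1 - p) := by rw [abs_of_nonpos (by nlinarith)]; ring
  have hsin : |(1 - p) * sin x| ≤ 1 - p := by
    rw [abs_mul, abs_of_nonneg (by linarith)]
    exact mul_le_of_le_one_right (by linarith) (abs_sin_le_one x)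
  calc |sin (x * p) - p * sin x| = |(sin (x * p) - sin x) + (1 - p) * sin x| := by ring_nf
    _ ≤ x * (1 - p) + (1 - p) := (abs_add_le _ _).trans (add_le_add hlip hsin)
    _ = (x + 1) * (1 - p) := by ring

lemma abs_sin_mul_div_sub_sin_div_le {x r p : ℝ} (hx : 0 ≤ x) (hr : 0 < r) (hp0 : 0 < p)
    (hp1 : p ≤ 1) : |sin (x * p) / (r * p) - sin x / r| ≤ (x + 1) * (1 - p) / (r * p) := by
  have hrp : 0 < r * p := mul_pos hr hp0
  rw [show sin (x * p) / (r * p) - sin x / r = (sin (x * p) - p * sin x) / (r * p) by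
    field_simp, abs_div, abs_of_pos hrp]
  exact div_le_div_of_nonneg_right (abs_sin_mul_sub_mul_sin_le hx hp1) hrp.le

lemma one_sub_sqrt_one_sub_le_s9 {a : ℝ} (ha0 : 0 ≤ a) (ha1 : a ≤ 1) : 1 - √(1 - a) ≤ a := by
  have : 1 - a ≤ √(1 - a) := le_sqrt_of_sq_le (by nlinarith)
  linarith

lemma div_two_mul_rpow_le {ν s r : ℝ} (hν : 0 < ν) (hs : 0 < s) (hr : 0 ≤ r)
    (hrρ : r ≤ 1 / 2 * (2 / ν) ^ (1 / s)) : ν / 2 * r ^ s ≤ (1 / 2) ^ s := by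
  have hρ_pow : (1 / 2 * (2 / ν) ^ (1 / s)) ^ s = (1 / 2) ^ s * (2 / ν) := by
    rw [mul_rpow (by norm_num) (by positivity), ← rpow_mul (by positivity),
      one_div_mul_cancel hs.ne', rpow_one]
  have hr_pow : r ^ s ≤ (1 / 2) ^ s * (2 / ν) := hρ_pow ▸ rpow_le_rpow hr hrρ hs.le
  calc ν / 2 * r ^ s ≤ ν / 2 * ((1 / 2) ^ s * (2 / ν)) := by gcongr
    _ = (1 / 2) ^ s := by field_simp

lemma sq_mul_rpow_eq {ν σ r : ℝ} (hr : 0 ≤ r) :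
    ν ^ 2 / 4 * r ^ (4 * σ - 2) = (ν / 2 * r ^ (2 * σ - 1)) ^ 2 := by
  rw [mul_pow, ← rpow_natCast (r ^ _), ← rpow_mul hr]
  norm_num; ring_nf

lemma add_one_mul_rpow_div {t r s : ℝ} (hr : 0 < r) :
    (t * r + 1) * r ^ s / r = t * r ^ s + r ^ (s - 1) := by
  rw [rpow_sub_one hr.ne']; field_simp

lemma exp_neg_mul_le_exp_mul_exp {ν t X R : ℝ} (hν : 0 ≤ ν) (ht : 0 ≤ t) (hX : 0 ≤ X)
    (hXR : X ≤ R) : exp (-(ν / 2) * t * X) ≤ exp (ν / 4 * R) * exp (-(ν / 4) * (1 + t) * X) := by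
  rw [← exp_add, exp_le_exp]
  nlinarith [mul_nonneg hν (mul_nonneg ht hX), mul_nonneg hν (sub_nonneg.2 hXR)]

theorem stmt9_general (n : ℕ) (ν σ : ℝ) (hν : 0 < ν)
    (hσ : σ ∈ Set.Ioc (1/2 : ℝ) 1) (ρ : ℝ)
    (hρ : ρ = (1/2) * (2/ν) ^ ((1:ℝ)/(2*σ - 1)))
    (φ : EuclideanSpace ℝ (Fin n) → ℝ)
    (hφ : ∀ ξ, φ ξ = Real.sqrt (1 - ν^2/4 * ‖ξ‖ ^ (4*σ - 2))) :
    ∃ C > 0, ∃ c > 0, ∀ t : ℝ, 0 ≤ t →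
      ∀ ξ : EuclideanSpace ℝ (Fin n), 0 < ‖ξ‖ → ‖ξ‖ ≤ ρ →
        |Real.exp (-(ν/2) * t * ‖ξ‖ ^ (2*σ)) * Real.sin (t * ‖ξ‖ * φ ξ) / (‖ξ‖ * φ ξ) -
            Real.exp (-(ν/2) * t * ‖ξ‖ ^ (2*σ)) * Real.sin (t * ‖ξ‖) / ‖ξ‖|
          ≤ C * Real.exp (-c * (1 + t) * ‖ξ‖ ^ (2*σ)) *
              (t * ‖ξ‖ ^ (4*σ - 2) + ‖ξ‖ ^ (4*σ - 3)) := by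
  have hs : 0 < 2 * σ - 1 := by linarith [hσ.1]
  set b : ℝ := (1 / 2) ^ (2 * σ - 1)
  have hb₀ : 0 ≤ b := by positivity
  have hb₁ : b < 1 := rpow_lt_one (by norm_num) (by norm_num) hs
  have hφ₀ : 0 < √(1 - b ^ 2) := sqrt_pos.2 (by nlinarith)
  refine ⟨ν ^ 2 / 4 / √(1 - b ^ 2) * exp (ν / 4 * ρ ^ (2 * σ)), by positivity, ν / 4,
    by positivity, fun t ht ξ hr hrρ => ?_⟩
  set r := ‖ξ‖
  set q := ν / 2 * r ^ (2 * σ - 1)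
  set E := exp (-(ν / 2) * t * r ^ (2 * σ))
  have hq0 : 0 ≤ q := by positivity
  have hqb : q ≤ b := div_two_mul_rpow_le hν hs hr.le (hρ ▸ hrρ)
  have hp : φ ξ = √(1 - q ^ 2) := by rw [hφ, sq_mul_rpow_eq hr.le]
  have hp₀ : √(1 - b ^ 2) ≤ φ ξ := hp ▸ sqrt_le_sqrt (by nlinarith)
  have hp₁ : φ ξ ≤ 1 := hp ▸ sqrt_le_one.2 (by nlinarith)
  have hp_sub : 1 - φ ξ ≤ q ^ 2 := hp ▸ one_sub_sqrt_one_sub_le_s9 (sq_nonneg q) (by nlinarith)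
  calc |E * sin (t * r * φ ξ) / (r * φ ξ) - E * sin (t * r) / r|
      = E * |sin (t * r * φ ξ) / (r * φ ξ) - sin (t * r) / r| := by
        rw [mul_div_assoc, mul_div_assoc, ← mul_sub, abs_mul, abs_of_pos (exp_pos _)]
    _ ≤ E * ((t * r + 1) * q ^ 2 / (r * √(1 - b ^ 2))) := by
        gcongr
        calc _ ≤ (t * r + 1) * (1 - φ ξ) / (r * φ ξ) :=
              abs_sin_mul_div_sub_sin_div_le (by positivity) hr (hφ₀.trans_le hp₀) hp₁
          _ ≤ _ := by gcongr
    _ = E * (ν ^ 2 / 4 / √(1 - b ^ 2)) * (t * r ^ (4 * σ - 2) + r ^ (4 * σ - 3)) := by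
        rw [← sq_mul_rpow_eq hr.le, show 4 * σ - 3 = 4 * σ - 2 - 1 by ring,
          ← add_one_mul_rpow_div hr]
        field_simp
    _ ≤ ν ^ 2 / 4 / √(1 - b ^ 2) * (exp (ν / 4 * ρ ^ (2 * σ)) *
          exp (-(ν / 4) * (1 + t) * r ^ (2 * σ))) * (t * r ^ (4 * σ - 2) + r ^ (4 * σ - 3)) := by
        rw [mul_comm E]
        gcongr
        exact exp_neg_mul_le_exp_mul_exp hν.le ht (by positivity)
          (rpow_le_rpow hr.le hrρ (by linarith))
    _ = _ := by ring

/-- Low-frequency approximation of the multiplier `𝒦₃` by the hybrid kernel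
`e^{-(ν/2)t|ξ|^{2σ}} sin(t|ξ|)/|ξ|` for `σ ∈ (1/2,1]`. -/
theorem stmt9 (n : ℕ) (hn : 1 ≤ n) (ν σ : ℝ) (hν : 0 < ν)
    (hσ : σ ∈ Set.Ioc (1/2 : ℝ) 1) (ρ : ℝ)
    (hρ : ρ = (1/2) * (2/ν) ^ ((1:ℝ)/(2*σ - 1)))
    (φ : EuclideanSpace ℝ (Fin n) → ℝ)
    (hφ : ∀ ξ, φ ξ = Real.sqrt (1 - ν^2/4 * ‖ξ‖ ^ (4*σ - 2))) :
    ∃ C > 0, ∃ c > 0, ∀ t : ℝ, 0 ≤ t →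
      ∀ ξ : EuclideanSpace ℝ (Fin n), 0 < ‖ξ‖ → ‖ξ‖ ≤ ρ →
        |Real.exp (-(ν/2) * t * ‖ξ‖ ^ (2*σ)) * Real.sin (t * ‖ξ‖ * φ ξ) / (‖ξ‖ * φ ξ) -
            Real.exp (-(ν/2) * t * ‖ξ‖ ^ (2*σ)) * Real.sin (t * ‖ξ‖) / ‖ξ‖|
          ≤ C * Real.exp (-c * (1 + t) * ‖ξ‖ ^ (2*σ)) *
              (t * ‖ξ‖ ^ (4*σ - 2) + ‖ξ‖ ^ (4*σ - 3)) :=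
  stmt9_general n ν σ hν hσ ρ hρ φ hφ
end

section
/- Fix n ≥ 1, ν > 0 and σ ∈ (1/2,1]. There exist constants C > 0 and c > 0 such that for every t ≥ 0 and every ξ ∈ ℝⁿ with 0 < |ξ| ≤ ρ: |∂ₜ𝒦₁(t,ξ) + e^{−(ν/2)t|ξ|^{2σ}} |ξ| sin(t|ξ|)| ≤ C e^{−c(1+t)|ξ|^{2σ}} ( t|ξ|^{4σ} + |ξ|^{2σ} ) and |∂ₜ𝒦₃(t,ξ) − e^{−(ν/2)t|ξ|^{2σ}} cos(t|ξ|)| ≤ C e^{−c(1+t)|ξ|^{2σ}} ( t|ξ|^{4σ−1} + |ξ|^{2σ−1} ), where ∂ₜ denotes the derivative in t. In particular, the time derivatives of 𝒦₁ and 𝒦₃ are NOT approximated by the time derivatives of the kernels e^{−(ν/2)t|ξ|^{2σ}}cos(t|ξ|) and e^{−(ν/2)t|ξ|^{2σ}}sin(t|ξ|)/|ξ|, but by −e^{−(ν/2)t|ξ|^{2σ}}|ξ|sin(t|ξ|) and e^{−(ν/2)t|ξ|^{2σ}}cos(t|ξ|) respectively. -/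
/-!
Write `r = |ξ|`, `s = r^(2σ-1)` and `q = (ν/2) s`. Every power of `r` in the estimates is then a
monomial in `s` and `r` (e.g. `r^(2σ) = s r`, `r^(4σ) = s² r²`), and on the ball `r ≤ ρ` one has
`q ≤ 2^(1-2σ) < 1`, so `φ = √(1 - q²)` is bounded below by `√(1 - 4^(1-2σ))` and `1 - φ ≤ q²`.
The phases `t r φ` and `t r` therefore differ by at most `t r q²`; since `sin` and `cos` are
`1`-Lipschitz, the errors are of size `q r`, `t r² q²` (first estimate) and `q / φ`, `t r q²`
(second). Finally `e^{-(ν/2) t r^{2σ}} ≤ e^ρ e^{-(ν/2)(1+t) r^{2σ}}` because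
`(ν/2) r^{2σ} = q r ≤ ρ`.
-/

open Real

section DampedOscillation

variable {q r t p : ℝ}

lemma abs_sin_mul_sub_sin_mul_mul_le (ht : 0 ≤ t) (hr : 0 ≤ r) (hp : p ≤ 1) :
    |sin (t * r) - sin (t * r * p)| ≤ t * r * (1 - p) := by
  calc _ ≤ |t * r - t * r * p| := abs_sin_sub_sin_le _ _
    _ = t * r * (1 - p) := by
      rw [← mul_one_sub, abs_of_nonneg (mul_nonneg (mul_nonneg ht hr) (by linarith))]

lemma abs_cos_mul_mul_sub_cos_mul_le (ht : 0 ≤ t) (hr : 0 ≤ r) (hp : p ≤ 1) :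
    |cos (t * r * p) - cos (t * r)| ≤ t * r * (1 - p) := by
  calc _ ≤ |t * r * p - t * r| := abs_cos_sub_cos_le _ _
    _ = t * r * (1 - p) := by
      rw [abs_sub_comm, ← mul_one_sub, abs_of_nonneg (mul_nonneg (mul_nonneg ht hr) (by linarith))]

lemma abs_damped_cos_deriv_add_le (hq : 0 ≤ q) (hq₁ : q ≤ 1) (hr : 0 ≤ r) (ht : 0 ≤ t)
    (hp : p ≤ 1) (hpq : 1 - p ≤ q ^ 2) :
    |-(q * r) * cos (t * r * p) - r * p * sin (t * r * p) + r * sin (t * r)|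
      ≤ 2 * q * r + t * r ^ 2 * q ^ 2 := by
  have hsplit : -(q * r) * cos (t * r * p) - r * p * sin (t * r * p) + r * sin (t * r)
      = -(q * r) * cos (t * r * p) + r * (sin (t * r) - sin (t * r * p))
        + r * (1 - p) * sin (t * r * p) := by ring
  have hdamp : |-(q * r) * cos (t * r * p)| ≤ q * r := by
    rw [abs_mul, abs_neg, abs_of_nonneg (mul_nonneg hq hr)]
    exact mul_le_of_le_one_right (mul_nonneg hq hr) (abs_cos_le_one _)
  have hphase : |r * (sin (t * r) - sin (t * r * p))| ≤ t * r ^ 2 * q ^ 2 := by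
    rw [abs_mul, abs_of_nonneg hr]
    calc r * |sin (t * r) - sin (t * r * p)| ≤ r * (t * r * (1 - p)) :=
          mul_le_mul_of_nonneg_left (abs_sin_mul_sub_sin_mul_mul_le ht hr hp) hr
      _ ≤ r * (t * r * q ^ 2) := by gcongr
      _ = t * r ^ 2 * q ^ 2 := by ring
  have hamp : |r * (1 - p) * sin (t * r * p)| ≤ q * r := by
    have h₀ : 0 ≤ r * (1 - p) := mul_nonneg hr (by linarith)
    rw [abs_mul, abs_of_nonneg h₀]
    calc r * (1 - p) * |sin (t * r * p)| ≤ r * (1 - p) :=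
          mul_le_of_le_one_right h₀ (abs_sin_le_one _)
      _ ≤ r * q ^ 2 := by gcongr
      _ ≤ q * r := by nlinarith [mul_nonneg (mul_nonneg hr hq) (sub_nonneg.2 hq₁)]
  rw [hsplit]
  linarith [abs_add_three (-(q * r) * cos (t * r * p)) (r * (sin (t * r) - sin (t * r * p)))
    (r * (1 - p) * sin (t * r * p))]

lemma abs_damped_sin_deriv_sub_le {p₀ : ℝ} (hq : 0 ≤ q) (hr : 0 < r) (ht : 0 ≤ t)
    (hp₀ : 0 < p₀) (hp₀p : p₀ ≤ p) (hp : p ≤ 1) (hpq : 1 - p ≤ q ^ 2) :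
    |-(q * r) * sin (t * r * p) / (r * p) + cos (t * r * p) - cos (t * r)|
      ≤ q / p₀ + t * r * q ^ 2 := by
  have hdamp : |-(q * r) * sin (t * r * p) / (r * p)| ≤ q / p₀ := by
    rw [show -(q * r) * sin (t * r * p) / (r * p) = -(q * sin (t * r * p) / p) by
      field_simp [hr.ne', (hp₀.trans_le hp₀p).ne']]
    rw [abs_neg, abs_div, abs_mul, abs_of_nonneg hq, abs_of_pos (hp₀.trans_le hp₀p)]
    calc q * |sin (t * r * p)| / p ≤ q / p :=
          div_le_div_of_nonneg_right (mul_le_of_le_one_right hq (abs_sin_le_one _)) (by linarith)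
      _ ≤ q / p₀ := by gcongr
  have hphase : |cos (t * r * p) - cos (t * r)| ≤ t * r * q ^ 2 :=
    (abs_cos_mul_mul_sub_cos_mul_le ht hr.le hp).trans (by gcongr)
  rw [add_sub_assoc]
  exact (abs_add_le _ _).trans (add_le_add hdamp hphase)

end DampedOscillation

lemma hasDerivAt_exp_mul_cos (k a r p t : ℝ) :
    HasDerivAt (fun s => exp (k * s * a) * cos (s * r * p))
      (exp (k * t * a) * (k * a * cos (t * r * p) - r * p * sin (t * r * p))) t := by
  have hexp : HasDerivAt (fun s => k * s * a) (k * a) t := by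
    simpa using ((hasDerivAt_id t).const_mul k).mul_const a
  have hphase : HasDerivAt (fun s => s * r * p) (r * p) t := by
    simpa using ((hasDerivAt_id t).mul_const r).mul_const p
  refine (hexp.exp.fun_mul hphase.cos).congr_deriv ?_
  ring

lemma hasDerivAt_exp_mul_sin_div (k a r p t : ℝ) (hrp : r * p ≠ 0) :
    HasDerivAt (fun s => exp (k * s * a) * sin (s * r * p) / (r * p))
      (exp (k * t * a) * (k * a * sin (t * r * p) / (r * p) + cos (t * r * p))) t := by
  have hexp : HasDerivAt (fun s => k * s * a) (k * a) t := by
    simpa using ((hasDerivAt_id t).const_mul k).mul_const a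
  have hphase : HasDerivAt (fun s => s * r * p) (r * p) t := by
    simpa using ((hasDerivAt_id t).mul_const r).mul_const p
  refine ((hexp.exp.fun_mul hphase.sin).div_const (r * p)).congr_deriv ?_
  field_simp
  rw [add_div, mul_div_cancel_left₀ _ hrp]

lemma rpow_eq_rpow_pow_mul_pow {r : ℝ} (hr : 0 < r) {x : ℝ} (α : ℝ) (k m : ℕ)
    (hx : x = α * k + m) : r ^ x = (r ^ α) ^ k * r ^ m := by
  rw [hx, rpow_add hr, rpow_mul_natCast hr.le, rpow_natCast]

noncomputable def lowFreqRadius (ν σ : ℝ) : ℝ := 1 / 2 * (2 / ν) ^ ((1 : ℝ) / (2 * σ - 1))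

lemma half_mul_rpow_le_of_le_lowFreqRadius {ν σ r : ℝ} (hν : 0 < ν) (hσ : 1 / 2 < σ)
    (hr : 0 ≤ r) (hrρ : r ≤ lowFreqRadius ν σ) :
    ν / 2 * r ^ (2 * σ - 1) ≤ (1 / 2) ^ (2 * σ - 1) := by
  have hσ' : 0 < 2 * σ - 1 := by linarith
  have hρ : lowFreqRadius ν σ ^ (2 * σ - 1) = (1 / 2) ^ (2 * σ - 1) * (2 / ν) := by
    rw [lowFreqRadius, mul_rpow (by norm_num) (by positivity), one_div (2 * σ - 1),
      rpow_inv_rpow (by positivity) hσ'.ne']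
  calc ν / 2 * r ^ (2 * σ - 1) ≤ ν / 2 * lowFreqRadius ν σ ^ (2 * σ - 1) := by
        gcongr
    _ = (1 / 2) ^ (2 * σ - 1) := by rw [hρ]; field_simp

lemma sqrt_one_sub_sq_bounds {q q₀ : ℝ} (hq : 0 ≤ q) (hqq₀ : q ≤ q₀) (hq₀ : q₀ ≤ 1) :
    √(1 - q₀ ^ 2) ≤ √(1 - q ^ 2) ∧ √(1 - q ^ 2) ≤ 1 ∧ 1 - √(1 - q ^ 2) ≤ q ^ 2 := by
  have hq₁ : q ^ 2 ≤ 1 := pow_le_one₀ hq (hqq₀.trans hq₀)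
  have hsqrt_le : √(1 - q ^ 2) ≤ 1 := sqrt_le_one.2 (by linarith [sq_nonneg q])
  refine ⟨sqrt_le_sqrt (by nlinarith), hsqrt_le, ?_⟩
  nlinarith [sq_sqrt (sub_nonneg.2 hq₁), sqrt_nonneg (1 - q ^ 2)]

lemma abs_exp_neg_mul_mul_le {c a t ρ K X A : ℝ} (hca : c * a ≤ ρ) (hX : |X| ≤ K * A) :
    |exp (-c * t * a) * X| ≤ exp ρ * K * exp (-c * (1 + t) * a) * A := by
  have hexp : exp (-c * t * a) ≤ exp ρ * exp (-c * (1 + t) * a) := by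
    rw [← exp_add]
    exact exp_le_exp.2 (by linarith)
  rw [abs_mul, abs_of_pos (exp_pos _)]
  calc exp (-c * t * a) * |X| ≤ exp ρ * exp (-c * (1 + t) * a) * (K * A) :=
        mul_le_mul hexp hX (abs_nonneg X) (by positivity)
    _ = exp ρ * K * exp (-c * (1 + t) * a) * A := by ring

lemma abs_exp_damped_cos_deriv_add_le {ν s r t p ρ K : ℝ} (hν : 0 < ν) (hs : 0 ≤ s)
    (hq : ν / 2 * s ≤ 1) (hr : 0 ≤ r) (ht : 0 ≤ t) (hp : p ≤ 1) (hpq : 1 - p ≤ (ν / 2 * s) ^ 2)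
    (hρ : ν / 2 * (s * r) ≤ ρ) (hK : ν + ν ^ 2 / 4 ≤ K) :
    |exp (-(ν / 2) * t * (s * r)) * (-(ν / 2) * (s * r) * cos (t * r * p) - r * p * sin (t * r * p))
        + exp (-(ν / 2) * t * (s * r)) * r * sin (t * r)|
      ≤ exp ρ * K * exp (-(ν / 2) * (1 + t) * (s * r)) * (t * (s ^ 2 * r ^ 2) + s * r) := by
  have hX := abs_damped_cos_deriv_add_le (by positivity) hq hr ht hp hpq
  have hA : 0 ≤ t * (s ^ 2 * r ^ 2) := by positivity
  have hB : 0 ≤ s * r := by positivity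
  convert abs_exp_neg_mul_mul_le (t := t) hρ (hX.trans ?_) using 2
  · ring
  · nlinarith [mul_le_mul_of_nonneg_right (show ν ≤ K by nlinarith) hB,
      mul_le_mul_of_nonneg_right (show ν ^ 2 / 4 ≤ K by linarith) hA]

lemma abs_exp_damped_sin_deriv_sub_le {ν s r t p p₀ ρ K : ℝ} (hν : 0 < ν) (hs : 0 ≤ s)
    (hr : 0 < r) (ht : 0 ≤ t) (hp₀ : 0 < p₀) (hp₀p : p₀ ≤ p) (hp : p ≤ 1)
    (hpq : 1 - p ≤ (ν / 2 * s) ^ 2) (hρ : ν / 2 * (s * r) ≤ ρ) (hK : ν / (2 * p₀) + ν ^ 2 / 4 ≤ K) :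
    |exp (-(ν / 2) * t * (s * r)) *
          (-(ν / 2) * (s * r) * sin (t * r * p) / (r * p) + cos (t * r * p))
        - exp (-(ν / 2) * t * (s * r)) * cos (t * r)|
      ≤ exp ρ * K * exp (-(ν / 2) * (1 + t) * (s * r)) * (t * (s ^ 2 * r) + s) := by
  have hX := abs_damped_sin_deriv_sub_le (by positivity) hr ht hp₀ hp₀p hp hpq
  have hA : 0 ≤ t * (s ^ 2 * r) := by positivity
  have hdiv : ν / 2 * s / p₀ = ν / (2 * p₀) * s := by field_simp
  have hνp₀ : 0 ≤ ν / (2 * p₀) := by positivity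
  convert abs_exp_neg_mul_mul_le (t := t) hρ (hX.trans ?_) using 2
  · field_simp
  · rw [hdiv]
    nlinarith [mul_le_mul_of_nonneg_right (show ν / (2 * p₀) ≤ K by nlinarith) hs,
      mul_le_mul_of_nonneg_right (show ν ^ 2 / 4 ≤ K by linarith) hA]

theorem stmt10_general (n : ℕ) (ν σ : ℝ) (hν : 0 < ν)
    (hσ : σ ∈ Set.Ioc (1/2 : ℝ) 1) (ρ : ℝ)
    (hρ : ρ = (1/2) * (2/ν) ^ ((1:ℝ)/(2*σ - 1)))
    (φ : EuclideanSpace ℝ (Fin n) → ℝ)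
    (hφ : ∀ ξ, φ ξ = Real.sqrt (1 - ν^2/4 * ‖ξ‖ ^ (4*σ - 2))) :
    ∃ C > 0, ∃ c > 0, ∀ t : ℝ, 0 ≤ t →
      ∀ ξ : EuclideanSpace ℝ (Fin n), 0 < ‖ξ‖ → ‖ξ‖ ≤ ρ →
        |deriv (fun s => Real.exp (-(ν/2) * s * ‖ξ‖ ^ (2*σ)) * Real.cos (s * ‖ξ‖ * φ ξ)) t +
            Real.exp (-(ν/2) * t * ‖ξ‖ ^ (2*σ)) * ‖ξ‖ * Real.sin (t * ‖ξ‖)|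
          ≤ C * Real.exp (-c * (1 + t) * ‖ξ‖ ^ (2*σ)) *
              (t * ‖ξ‖ ^ (4*σ) + ‖ξ‖ ^ (2*σ)) ∧
        |deriv (fun s => Real.exp (-(ν/2) * s * ‖ξ‖ ^ (2*σ)) *
              Real.sin (s * ‖ξ‖ * φ ξ) / (‖ξ‖ * φ ξ)) t -
            Real.exp (-(ν/2) * t * ‖ξ‖ ^ (2*σ)) * Real.cos (t * ‖ξ‖)|
          ≤ C * Real.exp (-c * (1 + t) * ‖ξ‖ ^ (2*σ)) *
              (t * ‖ξ‖ ^ (4*σ - 1) + ‖ξ‖ ^ (2*σ - 1)) := by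
  set q₀ : ℝ := (1 / 2) ^ (2 * σ - 1)
  have hq₀ : q₀ < 1 := rpow_lt_one (by norm_num) (by norm_num) (by linarith [hσ.1])
  set p₀ : ℝ := √(1 - q₀ ^ 2)
  have hp₀ : 0 < p₀ := sqrt_pos.2 (by nlinarith [show 0 ≤ q₀ by positivity])
  refine ⟨exp ρ * (ν + ν ^ 2 / 4 + ν / (2 * p₀)), by positivity, ν / 2, by positivity,
    fun t ht ξ hr hrρ => ?_⟩
  set r := ‖ξ‖
  set s := r ^ (2 * σ - 1) with hs_def
  have hs : 0 ≤ s := by positivity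
  have hq : ν / 2 * s ≤ q₀ :=
    half_mul_rpow_le_of_le_lowFreqRadius hν hσ.1 hr.le (hrρ.trans_eq hρ)
  have hφξ : φ ξ = √(1 - (ν / 2 * s) ^ 2) := by
    rw [hφ, rpow_eq_rpow_pow_mul_pow (x := 4 * σ - 2) hr (2 * σ - 1) 2 0 (by push_cast; ring),
      ← hs_def]
    ring_nf
  obtain ⟨hp₀p, hp₁, hpq⟩ : p₀ ≤ φ ξ ∧ φ ξ ≤ 1 ∧ 1 - φ ξ ≤ (ν / 2 * s) ^ 2 :=
    hφξ ▸ sqrt_one_sub_sq_bounds (by positivity) hq hq₀.le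
  have hqr : ν / 2 * (s * r) ≤ ρ := by nlinarith
  rw [(hasDerivAt_exp_mul_cos _ _ _ _ t).deriv,
    (hasDerivAt_exp_mul_sin_div _ _ _ _ t (mul_pos hr (hp₀.trans_le hp₀p)).ne').deriv,
    rpow_eq_rpow_pow_mul_pow (x := 2 * σ) hr (2 * σ - 1) 1 1 (by push_cast; ring),
    rpow_eq_rpow_pow_mul_pow (x := 4 * σ) hr (2 * σ - 1) 2 2 (by push_cast; ring),
    rpow_eq_rpow_pow_mul_pow (x := 4 * σ - 1) hr (2 * σ - 1) 2 1 (by push_cast; ring),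
    ← hs_def, pow_one, pow_one]
  have hK : 0 ≤ ν / (2 * p₀) := by positivity
  exact ⟨abs_exp_damped_cos_deriv_add_le hν hs (hq.trans hq₀.le) hr.le ht hp₁ hpq hqr
      (by linarith),
    abs_exp_damped_sin_deriv_sub_le hν hs hr ht hp₀ hp₀p hp₁ hpq hqr (by linarith)⟩

/-- Low-frequency approximation of the time derivatives of the multipliers `𝒦₁` and `𝒦₃`
by `-e^{-(ν/2)t|ξ|^{2σ}}|ξ| sin(t|ξ|)` and `e^{-(ν/2)t|ξ|^{2σ}} cos(t|ξ|)` respectively,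
for `σ ∈ (1/2,1]`. -/
theorem stmt10 (n : ℕ) (hn : 1 ≤ n) (ν σ : ℝ) (hν : 0 < ν)
    (hσ : σ ∈ Set.Ioc (1/2 : ℝ) 1) (ρ : ℝ)
    (hρ : ρ = (1/2) * (2/ν) ^ ((1:ℝ)/(2*σ - 1)))
    (φ : EuclideanSpace ℝ (Fin n) → ℝ)
    (hφ : ∀ ξ, φ ξ = Real.sqrt (1 - ν^2/4 * ‖ξ‖ ^ (4*σ - 2))) :
    ∃ C > 0, ∃ c > 0, ∀ t : ℝ, 0 ≤ t →
      ∀ ξ : EuclideanSpace ℝ (Fin n), 0 < ‖ξ‖ → ‖ξ‖ ≤ ρ →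
        |deriv (fun s => Real.exp (-(ν/2) * s * ‖ξ‖ ^ (2*σ)) * Real.cos (s * ‖ξ‖ * φ ξ)) t +
            Real.exp (-(ν/2) * t * ‖ξ‖ ^ (2*σ)) * ‖ξ‖ * Real.sin (t * ‖ξ‖)|
          ≤ C * Real.exp (-c * (1 + t) * ‖ξ‖ ^ (2*σ)) *
              (t * ‖ξ‖ ^ (4*σ) + ‖ξ‖ ^ (2*σ)) ∧
        |deriv (fun s => Real.exp (-(ν/2) * s * ‖ξ‖ ^ (2*σ)) *
              Real.sin (s * ‖ξ‖ * φ ξ) / (‖ξ‖ * φ ξ)) t -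
            Real.exp (-(ν/2) * t * ‖ξ‖ ^ (2*σ)) * Real.cos (t * ‖ξ‖)|
          ≤ C * Real.exp (-c * (1 + t) * ‖ξ‖ ^ (2*σ)) *
              (t * ‖ξ‖ ^ (4*σ - 1) + ‖ξ‖ ^ (2*σ - 1)) :=
  stmt10_general n ν σ hν hσ ρ hρ φ hφ
end

section
/- Let n ≥ 1, let γ₁, γ₂ be real numbers with 0 < γ₁ < γ₂, let g ∈ L¹(ℝⁿ) and set m := ∫_{ℝⁿ} g(y) dy. Let K : (0,∞) × ℝⁿ → ℝ be such that for every t > 0 the function K(t,·) is smooth, K(t,·) ∈ L²(ℝⁿ), its gradient ∇ₓK(t,·) ∈ L²(ℝⁿ), and there is a constant C > 0 with ‖K(t,·)‖_{L²(ℝⁿ)} ≤ C t^{−γ₁} and ‖∇ₓK(t,·)‖_{L²(ℝⁿ)} ≤ C t^{−γ₂} for all t > 0. Then ‖ K(t,·) ∗ g − m·K(t,·) ‖_{L²(ℝⁿ)} = o(t^{−γ₁}) as t → ∞; that is, lim_{t→∞} t^{γ₁} ‖ K(t,·) ∗ g − m·K(t,·) ‖_{L²(ℝⁿ)} = 0.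 -/
open MeasureTheory Filter ENNReal

variable {n : ℕ}

-- Cauchy-Schwarz in ENNReal with weight
lemma cs_weight {α : Type*} [MeasurableSpace α] {μ : Measure α} {u w : α → ℝ≥0∞}
    (hu : AEMeasurable u μ) (hw : AEMeasurable w μ) :
    (∫⁻ a, u a * w a ∂μ) ^ 2 ≤ (∫⁻ a, (u a) ^ 2 * w a ∂μ) * ∫⁻ a, w a ∂μ := by
  have hpq : Real.HolderConjugate 2 2 := Real.HolderConjugate.two_two
  have h := ENNReal.lintegral_mul_le_Lp_mul_Lq μ hpq
    (f := fun a => u a * (w a) ^ (1/2 : ℝ)) (g := fun a => (w a) ^ (1/2 : ℝ))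
    (hu.mul (hw.pow_const _)) (hw.pow_const _)
  have h2 : ∀ a, (u a * (w a) ^ (1/2 : ℝ)) * ((w a) ^ (1/2 : ℝ)) = u a * w a := by
    intro a
    rw [mul_assoc, ← ENNReal.rpow_add_of_nonneg _ _ (by norm_num) (by norm_num)]
    norm_num
  have h3 : ∀ a, (u a * (w a) ^ (1/2 : ℝ)) ^ (2:ℝ) = (u a) ^ 2 * w a := by
    intro a
    rw [ENNReal.mul_rpow_of_nonneg _ _ (by norm_num), ← ENNReal.rpow_natCast (u a) 2,
      ← ENNReal.rpow_mul]
    norm_num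
  have h4 : ∀ a, ((w a) ^ (1/2 : ℝ)) ^ (2:ℝ) = w a := by
    intro a; rw [← ENNReal.rpow_mul]; norm_num
  simp only [Pi.mul_apply, h2, h3, h4] at h
  calc (∫⁻ a, u a * w a ∂μ) ^ 2
      ≤ ((∫⁻ a, (u a) ^ 2 * w a ∂μ) ^ (1/2:ℝ) * (∫⁻ a, w a ∂μ) ^ (1/2:ℝ)) ^ 2 := by
        exact pow_le_pow_left' h 2
    _ = (∫⁻ a, (u a) ^ 2 * w a ∂μ) * ∫⁻ a, w a ∂μ := by
        rw [mul_pow, ← ENNReal.rpow_natCast (_ ^ (1/2:ℝ)) 2, ← ENNReal.rpow_natCast (_ ^ (1/2:ℝ)) 2,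
          ← ENNReal.rpow_mul, ← ENNReal.rpow_mul]
        norm_num

lemma cs_prob {α : Type*} [MeasurableSpace α] {μ : Measure α} [IsProbabilityMeasure μ]
    {u : α → ℝ≥0∞} (hu : AEMeasurable u μ) :
    (∫⁻ a, u a ∂μ) ^ 2 ≤ ∫⁻ a, (u a) ^ 2 ∂μ := by
  have := cs_weight (μ := μ) (w := fun _ => 1) hu aemeasurable_const
  simpa using this

lemma lint_translate (f : EuclideanSpace ℝ (Fin n) → ℝ≥0∞) (hf : Measurable f) (v : EuclideanSpace ℝ (Fin n)) :
    ∫⁻ x, f (x - v) = ∫⁻ x, f x :=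
  (measurePreserving_sub_right volume v).lintegral_comp hf

lemma ftc_decomp (h : EuclideanSpace ℝ (Fin n) → ℝ) (hsm : ContDiff ℝ (⊤ : ℕ∞) h) (x y : EuclideanSpace ℝ (Fin n)) :
    h (x - y) - h x = ∫ s in (0:ℝ)..1, (fderiv ℝ h (x - s • y)) (-y) := by
  have hder : ∀ s : ℝ, HasDerivAt (fun s : ℝ => h (x - s • y)) ((fderiv ℝ h (x - s • y)) (-y)) s := by
    intro s
    have h1 : HasDerivAt (fun s : ℝ => x - s • y) (-y) s := by
      simpa using ((hasDerivAt_id s).smul_const y).const_sub x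
    have h2 := (hsm.differentiable (by simp) (x - s • y)).hasFDerivAt
    exact h2.comp_hasDerivAt s h1
  have hcont : Continuous fun s : ℝ => (fderiv ℝ h (x - s • y)) (-y) := by
    have hc : Continuous fun s : ℝ => fderiv ℝ h (x - s • y) :=
      (hsm.continuous_fderiv (by simp)).comp
        (continuous_const.sub (continuous_id.smul continuous_const))
    exact hc.clm_apply continuous_const
  have := intervalIntegral.integral_eq_sub_of_hasDerivAt (f := fun s : ℝ => h (x - s • y))
    (a := 0) (b := 1) (fun s _ => hder s) (hcont.intervalIntegrable 0 1)
  simp only [one_smul, zero_smul, sub_zero] at this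
  rw [this]

lemma psi_deriv_bound (h : EuclideanSpace ℝ (Fin n) → ℝ) (hsm : ContDiff ℝ (⊤ : ℕ∞) h)
    (y : EuclideanSpace ℝ (Fin n)) :
    ∫⁻ x, ((‖h (x - y) - h x‖₊ : ℝ≥0∞)) ^ 2
      ≤ (‖y‖₊ : ℝ≥0∞) ^ 2 * ∫⁻ x, ((‖fderiv ℝ h x‖₊ : ℝ≥0∞)) ^ 2 := by
  set μ₁ : Measure ℝ := volume.restrict (Set.Ioc (0:ℝ) 1) with hμ₁
  haveI : IsProbabilityMeasure μ₁ := ⟨by simp [hμ₁]⟩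
  have hDc : Continuous (fderiv ℝ h) := hsm.continuous_fderiv (by simp)
  have hmeas : ∀ y' : EuclideanSpace ℝ (Fin n),
      Measurable fun x : EuclideanSpace ℝ (Fin n) => ((‖fderiv ℝ h x‖₊ : ℝ≥0∞)) ^ 2 := by
    intro y'
    exact (measurable_coe_nnreal_ennreal.comp hDc.nnnorm.measurable).pow_const 2
  -- pointwise bound
  have hpt : ∀ x, ((‖h (x - y) - h x‖₊ : ℝ≥0∞)) ^ 2
      ≤ (‖y‖₊ : ℝ≥0∞) ^ 2 * ∫⁻ s, ((‖fderiv ℝ h (x - s • y)‖₊ : ℝ≥0∞)) ^ 2 ∂μ₁ := by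
    intro x
    have h1 : ((‖h (x - y) - h x‖₊ : ℝ≥0∞))
        ≤ ∫⁻ s, (‖fderiv ℝ h (x - s • y)‖₊ : ℝ≥0∞) * (‖y‖₊ : ℝ≥0∞) ∂μ₁ := by
      rw [ftc_decomp h hsm x y, intervalIntegral.integral_of_le zero_le_one]
      refine le_trans (enorm_integral_le_lintegral_enorm _) (lintegral_mono fun s => ?_)
      have h0 : ‖(fderiv ℝ h (x - s • y)) (-y)‖₊ ≤ ‖fderiv ℝ h (x - s • y)‖₊ * ‖y‖₊ := by
        simpa [nnnorm_neg] using (fderiv ℝ h (x - s • y)).le_opNNNorm (-y)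
      exact ENNReal.coe_le_coe.2 h0
    have hmu : AEMeasurable (fun s : ℝ => ((‖fderiv ℝ h (x - s • y)‖₊ : ℝ≥0∞))) μ₁ :=
      (measurable_coe_nnreal_ennreal.comp
        (hDc.comp (continuous_const.sub (continuous_id.smul continuous_const))).nnnorm.measurable).aemeasurable
    calc ((‖h (x - y) - h x‖₊ : ℝ≥0∞)) ^ 2
        ≤ (∫⁻ s, (‖fderiv ℝ h (x - s • y)‖₊ : ℝ≥0∞) * (‖y‖₊ : ℝ≥0∞) ∂μ₁) ^ 2 :=
          pow_le_pow_left' h1 2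
      _ = ((∫⁻ s, (‖fderiv ℝ h (x - s • y)‖₊ : ℝ≥0∞) ∂μ₁) * (‖y‖₊ : ℝ≥0∞)) ^ 2 := by
          rw [lintegral_mul_const' _ _ coe_ne_top]
      _ = (‖y‖₊ : ℝ≥0∞) ^ 2 * (∫⁻ s, (‖fderiv ℝ h (x - s • y)‖₊ : ℝ≥0∞) ∂μ₁) ^ 2 := by ring
      _ ≤ (‖y‖₊ : ℝ≥0∞) ^ 2 * ∫⁻ s, ((‖fderiv ℝ h (x - s • y)‖₊ : ℝ≥0∞)) ^ 2 ∂μ₁ :=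
          mul_le_mul_right (cs_prob hmu) _
  calc ∫⁻ x, ((‖h (x - y) - h x‖₊ : ℝ≥0∞)) ^ 2
      ≤ ∫⁻ x, (‖y‖₊ : ℝ≥0∞) ^ 2 * ∫⁻ s, ((‖fderiv ℝ h (x - s • y)‖₊ : ℝ≥0∞)) ^ 2 ∂μ₁ :=
        lintegral_mono hpt
    _ = (‖y‖₊ : ℝ≥0∞) ^ 2 * ∫⁻ x, ∫⁻ s, ((‖fderiv ℝ h (x - s • y)‖₊ : ℝ≥0∞)) ^ 2 ∂μ₁ :=
        lintegral_const_mul' _ _ (by simp [pow_eq_top_iff])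
    _ = (‖y‖₊ : ℝ≥0∞) ^ 2 * ∫⁻ s, ∫⁻ x, ((‖fderiv ℝ h (x - s • y)‖₊ : ℝ≥0∞)) ^ 2 ∂(volume) ∂μ₁ := by
        congr 1
        refine lintegral_lintegral_swap ?_
        exact ((measurable_coe_nnreal_ennreal.comp
          (hDc.comp ((continuous_fst.sub (continuous_snd.smul continuous_const)))).nnnorm.measurable).pow_const 2).aemeasurable
    _ = (‖y‖₊ : ℝ≥0∞) ^ 2 * ∫⁻ s, (∫⁻ x, ((‖fderiv ℝ h x‖₊ : ℝ≥0∞)) ^ 2) ∂μ₁ := by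
        congr 1
        refine lintegral_congr fun s => ?_
        exact lint_translate (fun x => ((‖fderiv ℝ h x‖₊ : ℝ≥0∞)) ^ 2) (hmeas y) (s • y)
    _ = (‖y‖₊ : ℝ≥0∞) ^ 2 * ∫⁻ x, ((‖fderiv ℝ h x‖₊ : ℝ≥0∞)) ^ 2 := by
        rw [lintegral_const, measure_univ, mul_one]

lemma ennreal_mul_le_sq_add_sq (a b : ℝ≥0∞) : a * b ≤ a ^ 2 + b ^ 2 := by
  rcases le_total a b with hle | hle
  · calc a * b ≤ b * b := mul_le_mul_left hle b
      _ = b ^ 2 := (sq b).symm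
      _ ≤ a ^ 2 + b ^ 2 := le_add_self
  · calc a * b ≤ a * a := mul_le_mul_right hle a
      _ = a ^ 2 := (sq a).symm
      _ ≤ a ^ 2 + b ^ 2 := le_self_add

lemma psi_triangle (h : EuclideanSpace ℝ (Fin n) → ℝ) (hc : Continuous h)
    (y : EuclideanSpace ℝ (Fin n)) :
    ∫⁻ x, ((‖h (x - y) - h x‖₊ : ℝ≥0∞)) ^ 2 ≤ 6 * ∫⁻ x, ((‖h x‖₊ : ℝ≥0∞)) ^ 2 := by
  have hm2 : Measurable fun x : EuclideanSpace ℝ (Fin n) => ((‖h x‖₊ : ℝ≥0∞)) ^ 2 :=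
    (measurable_coe_nnreal_ennreal.comp hc.nnnorm.measurable).pow_const 2
  have hpt : ∀ x, ((‖h (x - y) - h x‖₊ : ℝ≥0∞)) ^ 2
      ≤ 3 * ((‖h (x - y)‖₊ : ℝ≥0∞)) ^ 2 + 3 * ((‖h x‖₊ : ℝ≥0∞)) ^ 2 := by
    intro x
    set a := ((‖h (x - y)‖₊ : ℝ≥0∞)) with ha
    set b := ((‖h x‖₊ : ℝ≥0∞)) with hb
    have h1 : ((‖h (x - y) - h x‖₊ : ℝ≥0∞)) ≤ a + b := by
      rw [ha, hb, ← ENNReal.coe_add]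
      exact ENNReal.coe_le_coe.2 (nnnorm_sub_le _ _)
    calc ((‖h (x - y) - h x‖₊ : ℝ≥0∞)) ^ 2 ≤ (a + b) ^ 2 := pow_le_pow_left' h1 2
      _ = a ^ 2 + (a * b) + (a * b + b ^ 2) := by ring
      _ ≤ a ^ 2 + (a ^ 2 + b ^ 2) + ((a ^ 2 + b ^ 2) + b ^ 2) := by
          gcongr <;> exact ennreal_mul_le_sq_add_sq a b
      _ = 3 * a ^ 2 + 3 * b ^ 2 := by ring
  calc ∫⁻ x, ((‖h (x - y) - h x‖₊ : ℝ≥0∞)) ^ 2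
      ≤ ∫⁻ x, (3 * ((‖h (x - y)‖₊ : ℝ≥0∞)) ^ 2 + 3 * ((‖h x‖₊ : ℝ≥0∞)) ^ 2) :=
        lintegral_mono hpt
    _ = 3 * (∫⁻ x, ((‖h (x - y)‖₊ : ℝ≥0∞)) ^ 2) + 3 * ∫⁻ x, ((‖h x‖₊ : ℝ≥0∞)) ^ 2 := by
        have hma : Measurable fun x : EuclideanSpace ℝ (Fin n) =>
            3 * ((‖h (x - y)‖₊ : ℝ≥0∞)) ^ 2 :=
          ((measurable_coe_nnreal_ennreal.comp
            (hc.comp (continuous_id.sub continuous_const)).nnnorm.measurable).pow_const 2).const_mul 3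
        rw [lintegral_add_left hma,
          lintegral_const_mul' _ _ (by norm_num), lintegral_const_mul' _ _ (by norm_num)]
    _ = 3 * (∫⁻ x, ((‖h x‖₊ : ℝ≥0∞)) ^ 2) + 3 * ∫⁻ x, ((‖h x‖₊ : ℝ≥0∞)) ^ 2 := by
        rw [lint_translate _ hm2 y]
    _ = 6 * ∫⁻ x, ((‖h x‖₊ : ℝ≥0∞)) ^ 2 := by ring

lemma main_est (h : EuclideanSpace ℝ (Fin n) → ℝ) (hsm : ContDiff ℝ (⊤ : ℕ∞) h)
    (hL2 : (∫⁻ x, ((‖h x‖₊ : ℝ≥0∞)) ^ 2) ≠ ∞)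
    (hDL2 : (∫⁻ x, ((‖fderiv ℝ h x‖₊ : ℝ≥0∞)) ^ 2) ≠ ∞)
    (g : EuclideanSpace ℝ (Fin n) → ℝ) (hgm : Measurable g) (hg : Integrable g) (R : ℝ) :
    ∫⁻ x, ((‖(∫ y, h (x - y) * g y) - (∫ y, g y) * h x‖₊ : ℝ≥0∞)) ^ 2
      ≤ (∫⁻ y, (‖g y‖₊ : ℝ≥0∞)) *
        ((ENNReal.ofReal R) ^ 2 * (∫⁻ x, ((‖fderiv ℝ h x‖₊ : ℝ≥0∞)) ^ 2) *
            (∫⁻ y, (‖g y‖₊ : ℝ≥0∞))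
          + 6 * (∫⁻ x, ((‖h x‖₊ : ℝ≥0∞)) ^ 2) * ∫⁻ y in {y | R < ‖y‖}, (‖g y‖₊ : ℝ≥0∞)) := by
  classical
  have hc : Continuous h := hsm.continuous
  set G : EuclideanSpace ℝ (Fin n) → ℝ≥0∞ := fun y => (‖g y‖₊ : ℝ≥0∞) with hG
  have hGm : Measurable G := measurable_coe_nnreal_ennreal.comp hgm.nnnorm
  have hGfin : ∀ y, G y ≠ ∞ := fun y => coe_ne_top
  set Ig : ℝ≥0∞ := ∫⁻ y, G y with hIg
  have hIgfin : Ig ≠ ∞ := by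
    have := hg.2
    rw [HasFiniteIntegral] at this
    exact this.ne
  set Λ2 : ℝ≥0∞ := ∫⁻ x, ((‖h x‖₊ : ℝ≥0∞)) ^ 2 with hΛ2
  set Δ2 : ℝ≥0∞ := ∫⁻ x, ((‖fderiv ℝ h x‖₊ : ℝ≥0∞)) ^ 2 with hΔ2
  set Ψ : EuclideanSpace ℝ (Fin n) → EuclideanSpace ℝ (Fin n) → ℝ≥0∞ :=
    fun x y => (‖h (x - y) - h x‖₊ : ℝ≥0∞) with hΨ
  have hΨc : Continuous fun p : EuclideanSpace ℝ (Fin n) × EuclideanSpace ℝ (Fin n) =>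
      Ψ p.1 p.2 := by
    apply Continuous.comp ENNReal.continuous_coe
    exact ((hc.comp (continuous_fst.sub continuous_snd)).sub (hc.comp continuous_fst)).nnnorm
  -- a.e. integrability
  have hWm : Measurable fun x => ∫⁻ y, (‖h (x - y)‖₊ : ℝ≥0∞) * G y := by
    apply Measurable.lintegral_prod_right
    exact ((measurable_coe_nnreal_ennreal.comp
      (hc.measurable.comp (measurable_fst.sub measurable_snd)).nnnorm).mul (hGm.comp measurable_snd))
  have hWlt : ∀ᵐ x : EuclideanSpace ℝ (Fin n),
      (∫⁻ y, (‖h (x - y)‖₊ : ℝ≥0∞) * G y) < ∞ := by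
    have hsq : ∫⁻ x, (∫⁻ y, (‖h (x - y)‖₊ : ℝ≥0∞) * G y) ^ 2 ≤ Λ2 * Ig * Ig := by
      have step1 : ∀ x, (∫⁻ y, (‖h (x - y)‖₊ : ℝ≥0∞) * G y) ^ 2
          ≤ (∫⁻ y, ((‖h (x - y)‖₊ : ℝ≥0∞)) ^ 2 * G y) * Ig := by
        intro x
        refine cs_weight ?_ hGm.aemeasurable
        exact (measurable_coe_nnreal_ennreal.comp
          (hc.measurable.comp (measurable_const.sub measurable_id)).nnnorm).aemeasurable
      calc ∫⁻ x, (∫⁻ y, (‖h (x - y)‖₊ : ℝ≥0∞) * G y) ^ 2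
          ≤ ∫⁻ x, (∫⁻ y, ((‖h (x - y)‖₊ : ℝ≥0∞)) ^ 2 * G y) * Ig := lintegral_mono step1
        _ = (∫⁻ x, ∫⁻ y, ((‖h (x - y)‖₊ : ℝ≥0∞)) ^ 2 * G y) * Ig :=
            lintegral_mul_const' _ _ hIgfin
        _ = (∫⁻ y, ∫⁻ x, ((‖h (x - y)‖₊ : ℝ≥0∞)) ^ 2 * G y) * Ig := by
            congr 1
            refine lintegral_lintegral_swap ?_
            exact (((measurable_coe_nnreal_ennreal.comp
              (hc.measurable.comp (measurable_fst.sub measurable_snd)).nnnorm).pow_const 2).mul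
              (hGm.comp measurable_snd)).aemeasurable
        _ = (∫⁻ y, Λ2 * G y) * Ig := by
            congr 1
            refine lintegral_congr fun y => ?_
            rw [lintegral_mul_const' _ _ (hGfin y), hΛ2,
              lint_translate (fun x => ((‖h x‖₊ : ℝ≥0∞)) ^ 2)
                ((measurable_coe_nnreal_ennreal.comp hc.nnnorm.measurable).pow_const 2) y]
        _ = Λ2 * Ig * Ig := by rw [lintegral_const_mul' _ _ hL2]
    have hlt : (∫⁻ x, (∫⁻ y, (‖h (x - y)‖₊ : ℝ≥0∞) * G y) ^ 2) ≠ ∞ :=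
      (lt_of_le_of_lt hsq (by
        exact lt_of_le_of_ne le_top (by
          exact ENNReal.mul_ne_top (ENNReal.mul_ne_top hL2 hIgfin) hIgfin))).ne
    have := ae_lt_top (hWm.pow_const 2) hlt
    filter_upwards [this] with x hx
    by_contra hcon
    rw [not_lt, top_le_iff] at hcon
    rw [hcon] at hx
    exact absurd hx (by simp)
  have hint : ∀ᵐ x : EuclideanSpace ℝ (Fin n),
      Integrable (fun y => h (x - y) * g y) volume := by
    filter_upwards [hWlt] with x hx
    refine ⟨((hc.comp (continuous_const.sub continuous_id)).measurable.mul
      hgm).aestronglyMeasurable, ?_⟩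
    rw [HasFiniteIntegral]
    calc ∫⁻ y, (‖h (x - y) * g y‖₊ : ℝ≥0∞)
        = ∫⁻ y, (‖h (x - y)‖₊ : ℝ≥0∞) * G y := by
          refine lintegral_congr fun y => ?_
          rw [nnnorm_mul, ENNReal.coe_mul]
      _ < ∞ := hx
  -- a.e. pointwise bound
  have hrep : ∀ᵐ x : EuclideanSpace ℝ (Fin n),
      ((‖(∫ y, h (x - y) * g y) - (∫ y, g y) * h x‖₊ : ℝ≥0∞)) ^ 2
        ≤ (∫⁻ y, Ψ x y * G y) ^ 2 := by
    filter_upwards [hint] with x hx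
    have heq : (∫ y, h (x - y) * g y) - (∫ y, g y) * h x
        = ∫ y, (h (x - y) - h x) * g y := by
      have h2 : Integrable (fun y => h x * g y) volume := hg.const_mul (h x)
      rw [show (fun y => (h (x - y) - h x) * g y)
          = fun y => h (x - y) * g y - h x * g y by funext y; ring,
        integral_sub hx h2, integral_const_mul]
      ring
    rw [heq]
    refine pow_le_pow_left' ?_ 2
    refine le_trans (enorm_integral_le_lintegral_enorm _) (le_of_eq ?_)
    refine lintegral_congr fun y => ?_
    exact enorm_mul _ _
  -- main chain
  set ψ : EuclideanSpace ℝ (Fin n) → ℝ≥0∞ := fun y => ∫⁻ x, (Ψ x y) ^ 2 with hψ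
  have hs : MeasurableSet {y : EuclideanSpace ℝ (Fin n) | R < ‖y‖} :=
    measurableSet_lt measurable_const continuous_norm.measurable
  have hψm : Measurable ψ :=
    Measurable.lintegral_prod_left (hΨc.measurable.pow_const 2)
  calc ∫⁻ x, ((‖(∫ y, h (x - y) * g y) - (∫ y, g y) * h x‖₊ : ℝ≥0∞)) ^ 2
      ≤ ∫⁻ x, (∫⁻ y, Ψ x y * G y) ^ 2 := lintegral_mono_ae hrep
    _ ≤ ∫⁻ x, (∫⁻ y, (Ψ x y) ^ 2 * G y) * Ig := by
        refine lintegral_mono fun x => ?_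
        refine cs_weight ?_ hGm.aemeasurable
        exact (ENNReal.continuous_coe.comp
          ((hc.comp (continuous_const.sub continuous_id)).sub continuous_const).nnnorm).measurable.aemeasurable
    _ = (∫⁻ x, ∫⁻ y, (Ψ x y) ^ 2 * G y) * Ig := lintegral_mul_const' _ _ hIgfin
    _ = (∫⁻ y, ∫⁻ x, (Ψ x y) ^ 2 * G y) * Ig := by
        congr 1
        refine lintegral_lintegral_swap ?_
        exact ((hΨc.measurable.pow_const 2).mul (hGm.comp measurable_snd)).aemeasurable
    _ = (∫⁻ y, ψ y * G y) * Ig := by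
        congr 1
        exact lintegral_congr fun y => lintegral_mul_const' _ _ (hGfin y)
    _ = ((∫⁻ y in {y | R < ‖y‖}ᶜ, ψ y * G y) + ∫⁻ y in {y | R < ‖y‖}, ψ y * G y) * Ig := by
        rw [← lintegral_add_compl (fun y => ψ y * G y) hs, add_comm]
    _ ≤ ((ENNReal.ofReal R) ^ 2 * Δ2 * Ig + 6 * Λ2 * ∫⁻ y in {y | R < ‖y‖}, G y) * Ig := by
        gcongr ?_ * Ig
        gcongr ?_ + ?_
        · calc ∫⁻ y in {y | R < ‖y‖}ᶜ, ψ y * G y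
              ≤ ∫⁻ y in {y | R < ‖y‖}ᶜ, (ENNReal.ofReal R) ^ 2 * Δ2 * G y := by
                refine setLIntegral_mono' hs.compl fun y hy => ?_
                have hyR : ‖y‖ ≤ R := by simpa using hy
                have hψy : ψ y ≤ (ENNReal.ofReal R) ^ 2 * Δ2 := by
                  refine le_trans (psi_deriv_bound h hsm y) ?_
                  gcongr
                  rw [← enorm_eq_nnnorm, ← ofReal_norm]
                  exact ENNReal.ofReal_le_ofReal hyR
                exact mul_le_mul_left hψy _
            _ = (ENNReal.ofReal R) ^ 2 * Δ2 * ∫⁻ y in {y | R < ‖y‖}ᶜ, G y := by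
                rw [lintegral_const_mul' _ _
                  (ENNReal.mul_ne_top (by simp [pow_eq_top_iff]) hDL2)]
            _ ≤ (ENNReal.ofReal R) ^ 2 * Δ2 * Ig :=
                mul_le_mul_right (setLIntegral_le_lintegral _ _) _
        · calc ∫⁻ y in {y | R < ‖y‖}, ψ y * G y
              ≤ ∫⁻ y in {y | R < ‖y‖}, 6 * Λ2 * G y := by
                refine setLIntegral_mono' hs fun y _ => ?_
                exact mul_le_mul_left (psi_triangle h hc y) _
            _ = 6 * Λ2 * ∫⁻ y in {y | R < ‖y‖}, G y := by
                rw [lintegral_const_mul' _ _ (ENNReal.mul_ne_top (by norm_num) hL2)]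
    _ = Ig * ((ENNReal.ofReal R) ^ 2 * Δ2 * Ig + 6 * Λ2 * ∫⁻ y in {y | R < ‖y‖}, G y) :=
        mul_comm _ _

lemma eLp2 {α : Type*} [MeasurableSpace α] {μ : Measure α} {F : Type*} [NormedAddCommGroup F]
    (f : α → F) : eLpNorm f 2 μ = (∫⁻ x, ((‖f x‖₊ : ℝ≥0∞)) ^ 2 ∂μ) ^ (1/2 : ℝ) := by
  rw [eLpNorm_eq_lintegral_rpow_enorm_toReal (by norm_num) (by norm_num)]
  simp only [enorm_eq_nnnorm]
  have h1 : (2:ℝ≥0∞).toReal = (2:ℝ) := by norm_num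
  rw [h1]
  congr 1
  · refine lintegral_congr fun x => ?_
    rw [← ENNReal.rpow_natCast]
    norm_num

lemma sq_rpow_half (x : ℝ≥0∞) : (x ^ (1/2 : ℝ)) ^ 2 = x := by
  rw [← ENNReal.rpow_natCast, ← ENNReal.rpow_mul]
  norm_num

lemma tail_small (g' : EuclideanSpace ℝ (Fin n) → ℝ) (hgm : Measurable g')
    (hg : Integrable g') {δ : ℝ≥0∞} (hδ : 0 < δ) :
    ∃ R : ℝ, 0 ≤ R ∧ ∫⁻ y in {y | R < ‖y‖}, (‖g' y‖₊ : ℝ≥0∞) ≤ δ := by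
  set G : EuclideanSpace ℝ (Fin n) → ℝ≥0∞ := fun y => (‖g' y‖₊ : ℝ≥0∞) with hG
  have hGm : Measurable G := measurable_coe_nnreal_ennreal.comp hgm.nnnorm
  set μg : Measure (EuclideanSpace ℝ (Fin n)) := volume.withDensity G with hμg
  have hsm : ∀ R : ℝ, MeasurableSet {y : EuclideanSpace ℝ (Fin n) | R < ‖y‖} := fun R =>
    measurableSet_lt measurable_const continuous_norm.measurable
  have happ : ∀ R : ℝ, μg {y | R < ‖y‖} = ∫⁻ y in {y | R < ‖y‖}, G y := fun R =>
    withDensity_apply _ (hsm R)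
  have hfin : μg {y | ((0:ℕ):ℝ) < ‖y‖} ≠ ∞ := by
    rw [happ]
    refine (lt_of_le_of_lt (setLIntegral_le_lintegral _ _) ?_).ne
    have := hg.2
    rwa [HasFiniteIntegral] at this
  have hanti : Antitone fun k : ℕ => {y : EuclideanSpace ℝ (Fin n) | (k:ℝ) < ‖y‖} := by
    intro k l hkl y hy
    simp only [Set.mem_setOf_eq] at hy ⊢
    exact lt_of_le_of_lt (by exact_mod_cast (Nat.cast_le (α := ℝ)).2 hkl) hy
  have hempty : (⋂ k : ℕ, {y : EuclideanSpace ℝ (Fin n) | (k:ℝ) < ‖y‖}) = ∅ := by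
    ext y
    simp only [Set.mem_iInter, Set.mem_setOf_eq, Set.mem_empty_iff_false, iff_false, not_forall,
      not_lt]
    obtain ⟨k, hk⟩ := exists_nat_gt ‖y‖
    exact ⟨k, hk.le⟩
  have htend := tendsto_measure_iInter_atTop (μ := μg)
    (s := fun k : ℕ => {y : EuclideanSpace ℝ (Fin n) | (k:ℝ) < ‖y‖})
    (fun k => (hsm (k:ℝ)).nullMeasurableSet) hanti ⟨0, hfin⟩
  rw [hempty, measure_empty] at htend
  have := htend.eventually_lt_const hδ
  obtain ⟨k, hk⟩ := this.exists
  exact ⟨(k:ℝ), Nat.cast_nonneg k, by rw [← happ]; exact hk.le⟩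

lemma rpow_half_sq (x : ℝ≥0∞) : (x ^ 2) ^ (1/2 : ℝ) = x := by
  rw [← ENNReal.rpow_natCast x 2, ← ENNReal.rpow_mul]
  norm_num



/-- General approximation principle (Proposition 7.5): if `‖K(t,·)‖_{L²} ≤ C t^{-γ₁}` and
`‖∇ₓK(t,·)‖_{L²} ≤ C t^{-γ₂}` with `0 < γ₁ < γ₂`, then for `g ∈ L¹` with mass `m`,
`‖K(t,·) ∗ g - m K(t,·)‖_{L²} = o(t^{-γ₁})` as `t → ∞`. -/
theorem stmt18 (n : ℕ) (hn : 1 ≤ n) (γ₁ γ₂ : ℝ) (hγ₁ : 0 < γ₁) (hγ : γ₁ < γ₂)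
    (g : EuclideanSpace ℝ (Fin n) → ℝ) (hg : Integrable g)
    (m : ℝ) (hm : m = ∫ y, g y)
    (K : ℝ → EuclideanSpace ℝ (Fin n) → ℝ)
    (hsmooth : ∀ t : ℝ, 0 < t → ContDiff ℝ (⊤ : ℕ∞) (K t))
    (hKL2 : ∀ t : ℝ, 0 < t → MemLp (K t) 2 volume)
    (hgradL2 : ∀ t : ℝ, 0 < t → MemLp (fun x => fderiv ℝ (K t) x) 2 volume)
    (C : ℝ) (hC : 0 < C)
    (hbound1 : ∀ t : ℝ, 0 < t →
      eLpNorm (K t) 2 volume ≤ ENNReal.ofReal (C * t ^ (-γ₁)))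
    (hbound2 : ∀ t : ℝ, 0 < t →
      eLpNorm (fun x => fderiv ℝ (K t) x) 2 volume ≤ ENNReal.ofReal (C * t ^ (-γ₂))) :
    Tendsto (fun t : ℝ => t ^ γ₁ *
        (eLpNorm (fun x => (∫ y, K t (x - y) * g y) - m * K t x) 2 volume).toReal)
      atTop (nhds 0) := by
  classical
  -- measurable representative
  set g' : EuclideanSpace ℝ (Fin n) → ℝ := hg.1.mk g with hg'def
  have hgae : g =ᵐ[volume] g' := hg.1.ae_eq_mk
  have hg'm : Measurable g' := hg.1.stronglyMeasurable_mk.measurable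
  have hg'i : Integrable g' := hg.congr hgae
  set F : ℝ → EuclideanSpace ℝ (Fin n) → ℝ :=
    fun t x => (∫ y, K t (x - y) * g' y) - (∫ y, g' y) * K t x with hFdef
  have hFeq : ∀ t : ℝ,
      (fun x => (∫ y, K t (x - y) * g y) - m * K t x) = F t := by
    intro t
    funext x
    have h1 : (∫ y, K t (x - y) * g y) = ∫ y, K t (x - y) * g' y := by
      refine integral_congr_ae ?_
      filter_upwards [hgae] with y hy
      rw [hy]
    have h2 : m = ∫ y, g' y := by rw [hm]; exact integral_congr_ae hgae
    rw [hFdef, h1, h2]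
  set G : EuclideanSpace ℝ (Fin n) → ℝ≥0∞ := fun y => (‖g' y‖₊ : ℝ≥0∞) with hGdef
  set Ig : ℝ≥0∞ := ∫⁻ y, G y with hIgdef
  have hIgfin : Ig ≠ ∞ := by
    have h2 := hg'i.2
    rw [HasFiniteIntegral] at h2
    exact h2.ne
  set Q : ℝ → ℝ≥0∞ := fun t => ∫⁻ x, ((‖F t x‖₊ : ℝ≥0∞)) ^ 2 with hQdef
  have heLp : ∀ t : ℝ, eLpNorm (F t) 2 volume = (Q t) ^ (1/2 : ℝ) := fun t => eLp2 (F t)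
  set Λ2 : ℝ → ℝ≥0∞ := fun t => ∫⁻ x, ((‖K t x‖₊ : ℝ≥0∞)) ^ 2 with hΛdef
  set Δ2 : ℝ → ℝ≥0∞ := fun t => ∫⁻ x, ((‖fderiv ℝ (K t) x‖₊ : ℝ≥0∞)) ^ 2 with hΔdef
  have hΛeq : ∀ t : ℝ, Λ2 t = (eLpNorm (K t) 2 volume) ^ 2 := by
    intro t; rw [eLp2 (K t), sq_rpow_half]
  have hΔeq : ∀ t : ℝ, Δ2 t = (eLpNorm (fun x => fderiv ℝ (K t) x) 2 volume) ^ 2 := by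
    intro t; rw [eLp2 (fun x => fderiv ℝ (K t) x), sq_rpow_half]
  have hΛfin : ∀ t : ℝ, 0 < t → Λ2 t ≠ ∞ := by
    intro t ht
    rw [hΛeq t]
    exact (ENNReal.pow_ne_top (hKL2 t ht).eLpNorm_lt_top.ne)
  have hΔfin : ∀ t : ℝ, 0 < t → Δ2 t ≠ ∞ := by
    intro t ht
    rw [hΔeq t]
    exact (ENNReal.pow_ne_top (hgradL2 t ht).eLpNorm_lt_top.ne)
  have hΛle : ∀ t : ℝ, 0 < t → Λ2 t ≤ (ENNReal.ofReal (C * t ^ (-γ₁))) ^ 2 := by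
    intro t ht
    rw [hΛeq t]
    exact pow_le_pow_left' (hbound1 t ht) 2
  have hΔle : ∀ t : ℝ, 0 < t → Δ2 t ≤ (ENNReal.ofReal (C * t ^ (-γ₂))) ^ 2 := by
    intro t ht
    rw [hΔeq t]
    exact pow_le_pow_left' (hbound2 t ht) 2
  have hkey : ∀ t : ℝ, 0 < t → ∀ R : ℝ,
      Q t ≤ Ig * ((ENNReal.ofReal R) ^ 2 * Δ2 t * Ig
        + 6 * Λ2 t * ∫⁻ y in {y | R < ‖y‖}, G y) := by
    intro t ht R
    exact main_est (K t) (hsmooth t ht) (hΛfin t ht) (hΔfin t ht) g' hg'm hg'i R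
  -- ENNReal limit
  set P : ℝ → ℝ≥0∞ := fun t => ENNReal.ofReal (t ^ γ₁) * eLpNorm (F t) 2 volume with hPdef
  have hP : Tendsto P atTop (nhds 0) := by
    rw [ENNReal.tendsto_nhds_zero]
    intro ε hε
    set ε' : ℝ≥0∞ := min ε 1 with hε'def
    have hε'pos : 0 < ε' := lt_min hε zero_lt_one
    have hε'2 : ε' ^ 2 ≠ 0 := pow_ne_zero 2 hε'pos.ne'
    set c : ℝ≥0∞ := Ig * (6 * (ENNReal.ofReal C) ^ 2) + 1 with hcdef
    have hc0 : c ≠ 0 := by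
      rw [hcdef]
      simp
    have hcT : c ≠ ∞ := by
      rw [hcdef]
      exact ENNReal.add_ne_top.2 ⟨ENNReal.mul_ne_top hIgfin
        (ENNReal.mul_ne_top (by norm_num) (ENNReal.pow_ne_top ENNReal.ofReal_ne_top)),
        one_ne_top⟩
    set δ : ℝ≥0∞ := ε' ^ 2 / 2 / c with hδdef
    have hδpos : 0 < δ := by
      rw [hδdef]
      refine ENNReal.div_pos ?_ hcT
      exact (ENNReal.div_pos hε'2 (by norm_num)).ne'
    obtain ⟨R, hR0, hRtail⟩ := tail_small g' hg'm hg'i hδpos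
    -- first-term tendsto
    have h0' : Tendsto (fun t : ℝ => C * t ^ (γ₁ - γ₂)) atTop (nhds 0) := by
      have := (tendsto_rpow_neg_atTop (by linarith : (0:ℝ) < γ₂ - γ₁)).const_mul C
      rw [mul_zero] at this
      convert this using 2 with t
      rw [neg_sub]
    have hA : Tendsto (fun t : ℝ =>
        Ig ^ 2 * (ENNReal.ofReal R) ^ 2 * (ENNReal.ofReal (C * t ^ (γ₁ - γ₂))) ^ 2)
        atTop (nhds 0) := by
      have h1 : Tendsto (fun t : ℝ => ENNReal.ofReal (C * t ^ (γ₁ - γ₂))) atTop (nhds 0) := by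
        have := ENNReal.tendsto_ofReal h0'
        rwa [ENNReal.ofReal_zero] at this
      have h2 : Tendsto (fun t : ℝ => (ENNReal.ofReal (C * t ^ (γ₁ - γ₂))) ^ 2)
          atTop (nhds 0) := by
        have hmul := ENNReal.Tendsto.mul h1 (Or.inr (by simp)) h1 (Or.inr (by simp))
        rw [mul_zero] at hmul
        simpa [pow_two] using hmul
      have h3 := ENNReal.Tendsto.const_mul (a := Ig ^ 2 * (ENNReal.ofReal R) ^ 2) h2
        (Or.inr (ENNReal.mul_ne_top (ENNReal.pow_ne_top hIgfin)
          (ENNReal.pow_ne_top ENNReal.ofReal_ne_top)))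
      rw [mul_zero] at h3
      exact h3
    have hApos : (0:ℝ≥0∞) < ε' ^ 2 / 2 := ENNReal.div_pos hε'2 (by norm_num)
    have hAev : ∀ᶠ t : ℝ in atTop,
        Ig ^ 2 * (ENNReal.ofReal R) ^ 2 * (ENNReal.ofReal (C * t ^ (γ₁ - γ₂))) ^ 2
          ≤ ε' ^ 2 / 2 :=
      (hA.eventually_lt_const hApos).mono fun t ht => ht.le
    filter_upwards [hAev, eventually_ge_atTop (1:ℝ)] with t hAt ht1
    have ht : (0:ℝ) < t := lt_of_lt_of_le one_pos ht1
    have htγ : (0:ℝ) ≤ t ^ γ₁ := Real.rpow_nonneg ht.le γ₁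
    -- per-term bounds
    have hΔb : (ENNReal.ofReal (t ^ γ₁)) ^ 2 * Δ2 t
        ≤ (ENNReal.ofReal (C * t ^ (γ₁ - γ₂))) ^ 2 := by
      calc (ENNReal.ofReal (t ^ γ₁)) ^ 2 * Δ2 t
          ≤ (ENNReal.ofReal (t ^ γ₁)) ^ 2 * (ENNReal.ofReal (C * t ^ (-γ₂))) ^ 2 :=
            mul_le_mul_right (hΔle t ht) _
        _ = (ENNReal.ofReal (t ^ γ₁) * ENNReal.ofReal (C * t ^ (-γ₂))) ^ 2 := (mul_pow _ _ 2).symm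
        _ = (ENNReal.ofReal (t ^ γ₁ * (C * t ^ (-γ₂)))) ^ 2 := by
            rw [ENNReal.ofReal_mul htγ]
        _ = (ENNReal.ofReal (C * t ^ (γ₁ - γ₂))) ^ 2 := by
            congr 2
            rw [show γ₁ - γ₂ = γ₁ + (-γ₂) by ring, Real.rpow_add ht]
            ring
    have hΛb : (ENNReal.ofReal (t ^ γ₁)) ^ 2 * Λ2 t ≤ (ENNReal.ofReal C) ^ 2 := by
      calc (ENNReal.ofReal (t ^ γ₁)) ^ 2 * Λ2 t
          ≤ (ENNReal.ofReal (t ^ γ₁)) ^ 2 * (ENNReal.ofReal (C * t ^ (-γ₁))) ^ 2 :=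
            mul_le_mul_right (hΛle t ht) _
        _ = (ENNReal.ofReal (t ^ γ₁ * (C * t ^ (-γ₁)))) ^ 2 := by
            rw [← mul_pow, ENNReal.ofReal_mul htγ]
        _ = (ENNReal.ofReal C) ^ 2 := by
            congr 2
            rw [mul_comm C, ← mul_assoc, ← Real.rpow_add ht]
            simp
    have hsq : P t ^ 2 ≤ ε' ^ 2 := by
      have h1 : P t ^ 2 = (ENNReal.ofReal (t ^ γ₁)) ^ 2 * Q t := by
        rw [hPdef]
        dsimp only
        rw [mul_pow, heLp t, sq_rpow_half]
      rw [h1]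
      set tl : ℝ≥0∞ := ∫⁻ y in {y | R < ‖y‖}, G y with htldef
      calc (ENNReal.ofReal (t ^ γ₁)) ^ 2 * Q t
          ≤ (ENNReal.ofReal (t ^ γ₁)) ^ 2 *
              (Ig * ((ENNReal.ofReal R) ^ 2 * Δ2 t * Ig + 6 * Λ2 t * tl)) :=
            mul_le_mul_right (hkey t ht R) _
        _ = Ig * ((ENNReal.ofReal R) ^ 2 * ((ENNReal.ofReal (t ^ γ₁)) ^ 2 * Δ2 t) * Ig)
            + Ig * 6 * tl * ((ENNReal.ofReal (t ^ γ₁)) ^ 2 * Λ2 t) := by ring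
        _ ≤ Ig * ((ENNReal.ofReal R) ^ 2 * (ENNReal.ofReal (C * t ^ (γ₁ - γ₂))) ^ 2 * Ig)
            + Ig * 6 * tl * (ENNReal.ofReal C) ^ 2 := by
            gcongr
        _ = Ig ^ 2 * (ENNReal.ofReal R) ^ 2 * (ENNReal.ofReal (C * t ^ (γ₁ - γ₂))) ^ 2
            + Ig * (6 * (ENNReal.ofReal C) ^ 2) * tl := by ring
        _ ≤ ε' ^ 2 / 2 + c * δ := by
            refine add_le_add hAt ?_
            refine mul_le_mul' ?_ hRtail
            rw [hcdef]
            exact le_add_right le_rfl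
        _ = ε' ^ 2 / 2 + ε' ^ 2 / 2 := by
            rw [hδdef, ENNReal.mul_div_cancel hc0 hcT]
        _ = ε' ^ 2 := ENNReal.add_halves _
    have hPle : P t ≤ ε' := by
      have h2 := ENNReal.rpow_le_rpow hsq (by norm_num : (0:ℝ) ≤ 1/2)
      rwa [rpow_half_sq, rpow_half_sq] at h2
    exact hPle.trans (min_le_left _ _)
  -- back to ℝ
  have h2 : Tendsto (fun t : ℝ => (P t).toReal) atTop (nhds 0) := by
    have := (ENNReal.tendsto_toReal (by simp : (0:ℝ≥0∞) ≠ ∞)).comp hP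
    exact this
  refine Tendsto.congr' ?_ h2
  filter_upwards [eventually_gt_atTop (0:ℝ)] with t ht
  rw [hPdef]
  dsimp only
  rw [ENNReal.toReal_mul, ENNReal.toReal_ofReal (Real.rpow_nonneg ht.le γ₁), hFeq t]
end
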